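/- arXiv:1509.07595 — 7 statements merged into one kernel-verified Lean document; each statement's English description precedes it below -/
import Mathlib

section
/- Let n ≥ 2 be an integer, let f : [0,∞) → ℝ be continuous with f ≥ 0 and f(u) > 0 for u > 0, and let γ > 0. Then there is no function y ∈ C¹(ℝ) such that y(t) > 0 for all t ∈ ℝ, the map t ↦ |y'(t)|^{n−2}·y'(t) is differentiable on ℝ with −(|y'|^{n−2}·y')'(t) = f(y(t))·e^{−t} for all t ∈ ℝ, lim_{t→∞} y(t) = γ and lim_{t→∞} y'(t) = 0. In other words, every solution of this equation with these conditions at +∞ must have a finite first zero. -/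
/-!
The quantity `w = |y'|^{n-2} y'` has derivative `-f(y) e^{-t} < 0`, so it is strictly decreasing;
since `u ↦ |u|^{n-2} u` is strictly increasing, `y'` is strictly decreasing too.
Together with `y'(∞) = 0` this forces `y' > 0` everywhere, so `y` is concave with positive slope at
`0`. Lying below its tangent line at `0`, `y` vanishes somewhere on `(-∞, 0]`.
-/

open Filter Topology

lemma strictMono_abs_pow_mul (k : ℕ) : StrictMono fun u : ℝ => |u| ^ k * u := by
  refine strictMono_of_odd_strictMonoOn_nonneg (fun u => by simp) fun u hu v hv huv => ?_
  simp only [abs_of_nonneg (Set.mem_Ici.mp hu), abs_of_nonneg (Set.mem_Ici.mp hv), ← pow_succ]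
  exact pow_lt_pow_left₀ huv hu k.succ_ne_zero

lemma StrictAnti.pos_of_tendsto_zero {g : ℝ → ℝ} (hg : StrictAnti g)
    (hlim : Tendsto g atTop (𝓝 0)) (t : ℝ) : 0 < g t :=
  (hg.antitone.le_of_tendsto hlim (t + 1)).trans_lt (hg (lt_add_one t))

lemma exists_nonpos_of_antitone_deriv {y : ℝ → ℝ} (hy : Differentiable ℝ y)
    (hanti : Antitone (deriv y)) (hpos : 0 < deriv y 0) : ∃ t, y t ≤ 0 := by
  rcases le_or_gt (y 0) 0 with hy0 | hy0
  · exact ⟨0, hy0⟩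
  set t := -(y 0 / deriv y 0)
  have ht : t ≤ 0 := neg_nonpos.mpr (div_pos hy0 hpos).le
  have htangent : deriv y 0 * (0 - t) ≤ y 0 - y t :=
    (convex_Iic 0).mul_sub_le_image_sub_of_le_deriv hy.continuous.continuousOn
      hy.differentiableOn (fun x hx => hanti (Set.mem_Iic.mp (interior_subset hx))) t ht 0
      (Set.mem_Iic.mpr le_rfl) ht
  have : deriv y 0 * (0 - t) = y 0 := by
    rw [zero_sub, neg_neg, mul_div_cancel₀ _ hpos.ne']
  exact ⟨t, by linarith⟩

theorem no_global_positive_solution_general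
    (n : ℕ)
    (f : ℝ → ℝ)
    (hfpos : ∀ u, 0 < u → 0 < f u)
    (γ : ℝ) :
    ¬ ∃ y : ℝ → ℝ,
      ContDiff ℝ 1 y ∧
      (∀ t : ℝ, 0 < y t) ∧
      (∀ t : ℝ, HasDerivAt (fun s : ℝ => |deriv y s| ^ (n - 2) * deriv y s)
        (-(f (y t) * Real.exp (-t))) t) ∧
      Filter.Tendsto y Filter.atTop (nhds γ) ∧
      Filter.Tendsto (deriv y) Filter.atTop (nhds 0) := by
  rintro ⟨y, hy, hpos, hode, -, hlim⟩
  have hw_anti : StrictAnti fun s => |deriv y s| ^ (n - 2) * deriv y s :=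
    strictAnti_of_hasDerivAt_neg hode fun t =>
      neg_neg_of_pos (mul_pos (hfpos _ (hpos t)) (Real.exp_pos _))
  have hanti : StrictAnti (deriv y) := fun a b hab =>
    (strictMono_abs_pow_mul (n - 2)).lt_iff_lt.mp (hw_anti hab)
  obtain ⟨t, ht⟩ := exists_nonpos_of_antitone_deriv (hy.differentiable one_ne_zero)
    hanti.antitone (hanti.pos_of_tendsto_zero hlim 0)
  exact (hpos t).not_ge ht

/-- Lemma 2.1 (finiteness of the first zero): there is no globally positive solution of
`-(|y'|^{n-2} y')' = f(y) e^{-t}` on all of `ℝ` with `y(∞) = γ`, `y'(∞) = 0`. -/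
theorem no_global_positive_solution
    (n : ℕ) (hn : 2 ≤ n)
    (f : ℝ → ℝ) (hfc : ContinuousOn f (Set.Ici 0))
    (hf0 : ∀ u, 0 ≤ u → 0 ≤ f u) (hfpos : ∀ u, 0 < u → 0 < f u)
    (γ : ℝ) (hγ : 0 < γ) :
    ¬ ∃ y : ℝ → ℝ,
      ContDiff ℝ 1 y ∧
      (∀ t : ℝ, 0 < y t) ∧
      (∀ t : ℝ, HasDerivAt (fun s : ℝ => |deriv y s| ^ (n - 2) * deriv y s)
        (-(f (y t) * Real.exp (-t))) t) ∧
      Filter.Tendsto y Filter.atTop (nhds γ) ∧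
      Filter.Tendsto (deriv y) Filter.atTop (nhds 0) :=
  no_global_positive_solution_general n f hfpos γ
end

section
/- Assume Hypotheses (H1) and (H3) hold. Then there exist γ₀ > 0, M > 0 and c ∈ ℝ such that for all γ ≥ γ₀: g(γ) − ((n−1)/n)·γ·g'(γ) ≥ M·(log γ)⁵ + c. In particular Hypothesis (H2) holds. -/
open Filter Asymptotics MeasureTheory

/-- Remark after Theorem 1.5: (H1) and (H3) imply the lower bound
`g(γ) - ((n-1)/n) γ g'(γ) ≥ M (log γ)^5 + c` for large `γ`; in particular (H2) holds. -/
theorem H1_H3_implies_H2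
    (n : ℕ) (hn : 2 ≤ n) (q a : ℝ) (hq1 : 1 < q) (hq2 : q ≤ (n : ℝ) / ((n : ℝ) - 1))
    (ha : 0 < a)
    (g g' g'' g''' ρ ρ' ρ'' ρ''' : ℝ → ℝ)
    (hgd1 : ∀ x > (0 : ℝ), HasDerivAt g (g' x) x)
    (hgd2 : ∀ x > (0 : ℝ), HasDerivAt g' (g'' x) x)
    (hgd3 : ∀ x > (0 : ℝ), HasDerivAt g'' (g''' x) x)
    (hgc : ContinuousOn g''' (Set.Ioi 0))
    (hρd1 : ∀ x > (0 : ℝ), HasDerivAt ρ (ρ' x) x)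
    (hρd2 : ∀ x > (0 : ℝ), HasDerivAt ρ' (ρ'' x) x)
    (hρd3 : ∀ x > (0 : ℝ), HasDerivAt ρ'' (ρ''' x) x)
    (hρc : ContinuousOn ρ''' (Set.Ioi 0))
    (hgform : ∀ x > (0 : ℝ), g x = a * x ^ q + ρ x)
    -- Hypothesis (H1)
    (H1_0 : Tendsto (fun s => ρ s / s ^ q) atTop (nhds 0))
    (H1_1 : Tendsto (fun s => ρ' s / s ^ (q - 1)) atTop (nhds 0))
    (H1_2 : Tendsto (fun s => ρ'' s / s ^ (q - 2)) atTop (nhds 0))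
    (H1_3 : Tendsto (fun s => ρ''' s / s ^ (q - 3)) atTop (nhds 0))
    -- Hypothesis (H3)
    (H3 : Tendsto
      (fun s => g' s / (g'' s * (Real.log (g' s)) ^ 4) * (g' s - ((n : ℝ) - 1) * s * g'' s))
      atTop atTop)
    :
    ∃ γ₀ > (0 : ℝ), ∃ M > (0 : ℝ), ∃ c : ℝ,
      (∀ γ ≥ γ₀, M * (Real.log γ) ^ 5 + c ≤ g γ - (((n : ℝ) - 1) / (n : ℝ)) * γ * g' γ) ∧
      ∃ b : ℝ, ∀ᶠ s in atTop, b ≤ g s - (((n : ℝ) - 1) / (n : ℝ)) * s * g' s := by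
  have hq0 : (0:ℝ) < q - 1 := by linarith
  have hn2 : (2:ℝ) ≤ (n:ℝ) := by exact_mod_cast hn
  have hn0 : (0:ℝ) < (n:ℝ) := by linarith
  have haq : (0:ℝ) < a * q := by positivity
  have haq2 : (0:ℝ) < a * q * (q - 1) := by positivity
  -- Step 1: formulas for g' and g''
  have hg'form : ∀ x > (0:ℝ), g' x = a * q * x ^ (q-1) + ρ' x := by
    intro x hx
    have hrp : HasDerivAt (fun y : ℝ => y ^ q) (q * x ^ (q-1)) x :=
      Real.hasDerivAt_rpow_const (Or.inl hx.ne')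
    have h1 : HasDerivAt (fun y => a * y ^ q + ρ y) (a * (q * x ^ (q-1)) + ρ' x) x :=
      (hrp.const_mul a).add (hρd1 x hx)
    have heq : g =ᶠ[nhds x] fun y => a * y ^ q + ρ y :=
      Filter.eventually_of_mem (Ioi_mem_nhds hx) (fun y hy => hgform y hy)
    have h2 : HasDerivAt g (a * (q * x ^ (q-1)) + ρ' x) x := h1.congr_of_eventuallyEq heq
    have := (hgd1 x hx).unique h2
    rw [this]; ring
  have hg''form : ∀ x > (0:ℝ), g'' x = a * q * (q-1) * x ^ (q-2) + ρ'' x := by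
    intro x hx
    have hrp : HasDerivAt (fun y : ℝ => y ^ (q-1)) ((q-1) * x ^ ((q-1)-1)) x :=
      Real.hasDerivAt_rpow_const (Or.inl hx.ne')
    have h1 : HasDerivAt (fun y => a * q * y ^ (q-1) + ρ' y)
        (a * q * ((q-1) * x ^ ((q-1)-1)) + ρ'' x) x :=
      (hrp.const_mul (a*q)).add (hρd2 x hx)
    have heq : g' =ᶠ[nhds x] fun y => a * q * y ^ (q-1) + ρ' y :=
      Filter.eventually_of_mem (Ioi_mem_nhds hx) (fun y hy => hg'form y hy)
    have h2 : HasDerivAt g' (a * q * ((q-1) * x ^ ((q-1)-1)) + ρ'' x) x :=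
      h1.congr_of_eventuallyEq heq
    have := (hgd2 x hx).unique h2
    rw [this]
    have : (q-1)-1 = q-2 := by ring
    rw [this]; ring
  -- Step 2: ratio limits
  have hg'r : Tendsto (fun s => g' s / s ^ (q-1)) atTop (nhds (a*q)) := by
    have h0 : Tendsto (fun s => a*q + ρ' s / s ^ (q-1)) atTop (nhds (a*q + 0)) :=
      tendsto_const_nhds.add H1_1
    rw [add_zero] at h0
    refine h0.congr' ?_
    filter_upwards [eventually_gt_atTop (0:ℝ)] with s hs
    have hp : (0:ℝ) < s ^ (q-1) := Real.rpow_pos_of_pos hs _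
    rw [hg'form s hs, add_div, mul_div_assoc, div_self hp.ne', mul_one]
  have hg''r : Tendsto (fun s => g'' s / s ^ (q-2)) atTop (nhds (a*q*(q-1))) := by
    have h0 : Tendsto (fun s => a*q*(q-1) + ρ'' s / s ^ (q-2)) atTop (nhds (a*q*(q-1) + 0)) :=
      tendsto_const_nhds.add H1_2
    rw [add_zero] at h0
    refine h0.congr' ?_
    filter_upwards [eventually_gt_atTop (0:ℝ)] with s hs
    have hp : (0:ℝ) < s ^ (q-2) := Real.rpow_pos_of_pos hs _
    rw [hg''form s hs, add_div, mul_div_assoc, div_self hp.ne', mul_one]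
  -- Step 3: eventual positivity
  have ev_g'pos : ∀ᶠ s in atTop, 0 < g' s := by
    filter_upwards [hg'r.eventually (eventually_gt_nhds haq), eventually_gt_atTop (0:ℝ)]
      with s h1 h2
    have hp : (0:ℝ) < s ^ (q-1) := Real.rpow_pos_of_pos h2 _
    have := mul_pos h1 hp
    rwa [div_mul_cancel₀ _ hp.ne'] at this
  have ev_g''pos : ∀ᶠ s in atTop, 0 < g'' s := by
    filter_upwards [hg''r.eventually (eventually_gt_nhds haq2), eventually_gt_atTop (0:ℝ)]
      with s h1 h2
    have hp : (0:ℝ) < s ^ (q-2) := Real.rpow_pos_of_pos h2 _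
    have := mul_pos h1 hp
    rwa [div_mul_cancel₀ _ hp.ne'] at this
  -- Step 4: s g''/g' → q-1
  have hr2 : Tendsto (fun s => s * g'' s / g' s) atTop (nhds (q-1)) := by
    have h := hg''r.div hg'r haq.ne'
    have he : a*q*(q-1)/(a*q) = q-1 := by field_simp
    rw [he] at h
    refine h.congr' ?_
    filter_upwards [eventually_gt_atTop (0:ℝ), ev_g'pos] with s hs hg'
    have hp1 : (0:ℝ) < s ^ (q-1) := Real.rpow_pos_of_pos hs _
    have hp2 : (0:ℝ) < s ^ (q-2) := Real.rpow_pos_of_pos hs _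
    have hps : s ^ (q-1) = s ^ (q-2) * s := by
      rw [show q-1 = (q-2)+1 by ring, Real.rpow_add_one hs.ne']
    simp only [Pi.div_apply]
    rw [hps]
    field_simp
  have ev5 : ∀ᶠ s in atTop, (q-1)/2 ≤ s * g'' s / g' s :=
    hr2.eventually (eventually_ge_nhds (by linarith))
  -- Step 5: log lower bound
  have hlt : Tendsto (fun s => Real.log (g' s) - (q-1) * Real.log s) atTop
      (nhds (Real.log (a*q))) := by
    have h := hg'r.log haq.ne'
    refine h.congr' ?_
    filter_upwards [eventually_gt_atTop (0:ℝ), ev_g'pos] with s hs hg'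
    have hp : (0:ℝ) < s ^ (q-1) := Real.rpow_pos_of_pos hs _
    rw [Real.log_div hg'.ne' hp.ne', Real.log_rpow hs]
  have ev4 : ∀ᶠ s in atTop, (q-1)/2 * Real.log s ≤ Real.log (g' s) := by
    have hsum : Tendsto (fun s => (Real.log (g' s) - (q-1) * Real.log s)
        + (q-1)/2 * Real.log s) atTop atTop :=
      hlt.add_atTop (Real.tendsto_log_atTop.const_mul_atTop (by linarith))
    filter_upwards [hsum.eventually_ge_atTop 0] with s hs
    nlinarith [Real.log_nonneg (le_refl (1:ℝ))]
  have ev6 : ∀ᶠ s in atTop,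
      1 ≤ g' s / (g'' s * (Real.log (g' s)) ^ 4) * (g' s - ((n:ℝ) - 1) * s * g'' s) :=
    H3.eventually_ge_atTop 1
  -- extract γ₀
  obtain ⟨γ₁, hγ₁⟩ := eventually_atTop.mp
    ((((ev_g'pos.and ev_g''pos).and (ev4.and ev5)).and ev6))
  set γ₀ : ℝ := max γ₁ 2 with hγ₀def
  have hγ₀2 : (2:ℝ) ≤ γ₀ := le_max_right _ _
  have hγ₀pos : (0:ℝ) < γ₀ := by linarith
  set cn : ℝ := ((n:ℝ) - 1) / n with hcn
  set c₄ : ℝ := ((q-1)/2)^5 with hc4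
  have hc4pos : (0:ℝ) < c₄ := by positivity
  set M : ℝ := c₄ / (5 * n) with hM
  have hMpos : (0:ℝ) < M := by positivity
  -- facts at points s ≥ γ₀
  have props : ∀ s, γ₀ ≤ s → ((0 < g' s ∧ 0 < g'' s) ∧
      ((q-1)/2 * Real.log s ≤ Real.log (g' s) ∧ (q-1)/2 ≤ s * g'' s / g' s)) ∧
      1 ≤ g' s / (g'' s * (Real.log (g' s)) ^ 4) * (g' s - ((n:ℝ) - 1) * s * g'' s) := by
    intro s hs
    exact hγ₁ s (le_trans (le_max_left _ _) hs)
  -- key pointwise estimate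
  have key : ∀ s, γ₀ ≤ s → c₄ * (Real.log s)^4 / s ≤ g' s - ((n:ℝ) - 1) * s * g'' s := by
    intro s hs
    obtain ⟨⟨⟨hg'p, hg''p⟩, h4, h5⟩, h6⟩ := props s hs
    have hs2 : (2:ℝ) ≤ s := le_trans hγ₀2 hs
    have hs0 : (0:ℝ) < s := by linarith
    have hlogs : (0:ℝ) < Real.log s := Real.log_pos (by linarith)
    have hlogg' : (0:ℝ) < Real.log (g' s) := lt_of_lt_of_le (by positivity) h4
    set T : ℝ := g' s / (g'' s * (Real.log (g' s)) ^ 4) with hT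
    have hTpos : 0 < T := div_pos hg'p (by positivity)
    have hstep1 : 1 / T ≤ g' s - ((n:ℝ) - 1) * s * g'' s := by
      rw [div_le_iff₀ hTpos, mul_comm]
      exact h6
    have hinv : 1 / T = g'' s * (Real.log (g' s)) ^ 4 / g' s := one_div_div _ _
    have hgg : (q-1)/(2*s) ≤ g'' s / g' s := by
      have h1 : ((q-1)/2) / s ≤ (s * g'' s / g' s) / s := by gcongr
      have h2 : (s * g'' s / g' s) / s = g'' s / g' s := by
        field_simp
      rw [h2] at h1
      calc (q-1)/(2*s) = ((q-1)/2)/s := by ring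
        _ ≤ _ := h1
    have hpow : ((q-1)/2 * Real.log s)^4 ≤ (Real.log (g' s))^4 := by
      apply pow_le_pow_left₀ (by positivity) h4
    have hmul : (q-1)/(2*s) * ((q-1)/2 * Real.log s)^4 ≤
        g'' s / g' s * (Real.log (g' s))^4 :=
      mul_le_mul hgg hpow (by positivity) (by positivity)
    have hfin : c₄ * (Real.log s)^4 / s = (q-1)/(2*s) * ((q-1)/2 * Real.log s)^4 := by
      rw [hc4]; field_simp
    calc c₄ * (Real.log s)^4 / s = (q-1)/(2*s) * ((q-1)/2 * Real.log s)^4 := hfin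
      _ ≤ g'' s / g' s * (Real.log (g' s))^4 := hmul
      _ = g'' s * (Real.log (g' s))^4 / g' s := by ring
      _ = 1 / T := hinv.symm
      _ ≤ _ := hstep1
  -- the auxiliary function and its derivative
  set h : ℝ → ℝ := fun t => g t - cn * t * g' t - M * (Real.log t)^5 with hh
  set dh : ℝ → ℝ := fun s => g' s - (cn * 1 * g' s + cn * s * g'' s)
      - M * ((5:ℕ) * (Real.log s)^4 * s⁻¹) with hdh
  have hderivh : ∀ s, 0 < s → HasDerivAt h (dh s) s := by
    intro s hs
    have h1 : HasDerivAt (fun t => cn * t * g' t) (cn * 1 * g' s + cn * s * g'' s) s :=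
      ((hasDerivAt_id s).const_mul cn).mul (hgd2 s hs)
    have h2 : HasDerivAt (fun t => (Real.log t)^5) ((5:ℕ) * (Real.log s)^(5-1) * s⁻¹) s :=
      (Real.hasDerivAt_log hs.ne').pow 5
    exact ((hgd1 s hs).sub h1).sub (h2.const_mul M)
  have hdhnn : ∀ s, γ₀ ≤ s → 0 ≤ dh s := by
    intro s hs
    have hs0 : (0:ℝ) < s := lt_of_lt_of_le hγ₀pos hs
    have hkey := key s hs
    have heq : dh s = (1/(n:ℝ)) * ((g' s - ((n:ℝ) - 1) * s * g'' s)
        - c₄ * (Real.log s)^4 / s) := by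
      rw [hdh]
      simp only [hcn, hM]
      field_simp
      ring
    rw [heq]
    exact mul_nonneg (by positivity) (sub_nonneg.mpr hkey)
  have hmono : MonotoneOn h (Set.Ici γ₀) := by
    apply monotoneOn_of_deriv_nonneg (convex_Ici γ₀)
    · intro x hx
      exact (hderivh x (lt_of_lt_of_le hγ₀pos hx)).continuousAt.continuousWithinAt
    · intro x hx
      rw [interior_Ici] at hx
      exact (hderivh x (lt_trans hγ₀pos hx)).differentiableAt.differentiableWithinAt
    · intro x hx
      rw [interior_Ici] at hx
      rw [(hderivh x (lt_trans hγ₀pos hx)).deriv]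
      exact hdhnn x hx.le
  refine ⟨γ₀, hγ₀pos, M, hMpos, h γ₀, ?_, ?_⟩
  · intro γ hγ
    have := hmono (Set.self_mem_Ici) (Set.mem_Ici.mpr hγ) hγ
    simp only [hh] at this ⊢
    linarith
  · refine ⟨h γ₀, ?_⟩
    filter_upwards [eventually_ge_atTop γ₀] with s hs
    have := hmono (Set.self_mem_Ici) (Set.mem_Ici.mpr hs) hs
    simp only [hh] at this ⊢
    have hlogs : (0:ℝ) ≤ Real.log s := Real.log_nonneg (by linarith [le_trans hγ₀2 hs])
    nlinarith [pow_nonneg hlogs 5]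
end

section
/- Assume Hypothesis (H1) holds. Then there exist s₀ > 0 such that g is strictly increasing on [s₀,∞) (so the inverse g⁻¹ : [g(s₀),∞) → [s₀,∞) is defined), γ₀ ≥ 2·s₀ and C > 0 such that for all γ ≥ γ₀ and all η with 0 ≤ η ≤ g(γ) − g(γ/2): |g⁻¹(g(γ) − η) − (γ − η/g'(γ))| ≤ C·η²·g''(γ)/g'(γ)³. -/
/-!
By (H1), for large arguments `g'` and `g''` lie between `1/2` and `3/2` times the derivatives
`a q s^(q-1)`, `a q (q-1) s^(q-2)` of the leading term, so `g` is increasing and `g'`, `g''` change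
by at most a bounded factor on `[γ/2, γ]`. If `g x = g γ - η`, the mean value theorem gives
`η = g'(ξ) (γ - x)` and `0 ≤ g'(γ) - g'(ξ) ≤ (sup g'') (γ - x)`, and the error of the Newton step
`γ - η / g'(γ)` is `(γ - x) (g'(γ) - g'(ξ)) / g'(γ) = O(η² g''(γ) / g'(γ)³)`.
-/

open Filter Topology Set

lemma rpow_le_two_rpow_abs_mul_rpow {s t : ℝ} (p : ℝ) (hs : 0 < s) (ht : 0 < t)
    (hst : s ≤ 2 * t) (hts : t ≤ 2 * s) : s ^ p ≤ 2 ^ |p| * t ^ p := by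
  rw [← div_mul_cancel₀ s ht.ne', Real.mul_rpow (by positivity) ht.le]
  gcongr
  rcases le_total 0 p with hp | hp
  · rw [abs_of_nonneg hp]
    exact Real.rpow_le_rpow (by positivity) ((div_le_iff₀ ht).2 hst) hp
  · calc (s / t) ^ p ≤ 2⁻¹ ^ p :=
          Real.rpow_le_rpow_of_nonpos (by norm_num) (by rw [le_div_iff₀ ht]; linarith) hp
      _ = 2 ^ |p| := by rw [abs_of_nonpos hp, Real.inv_rpow zero_le_two, Real.rpow_neg zero_le_two]

lemma eq_mul_rpow_sub_one_add_of_hasDerivAt {f f' r r' : ℝ → ℝ} {c p : ℝ}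
    (hf : ∀ x > 0, f x = c * x ^ p + r x) (hf' : ∀ x > 0, HasDerivAt f (f' x) x)
    (hr' : ∀ x > 0, HasDerivAt r (r' x) x) : ∀ x > 0, f' x = c * p * x ^ (p - 1) + r' x := by
  intro x hx
  have hsum : HasDerivAt (fun y => c * y ^ p + r y) (c * (p * x ^ (p - 1)) + r' x) x :=
    ((Real.hasDerivAt_rpow_const (Or.inl hx.ne')).const_mul c).add (hr' x hx)
  rw [(hf' x hx).unique (hsum.congr_of_eventuallyEq (eventually_of_mem (Ioi_mem_nhds hx) hf)),
    mul_assoc]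

lemma eventually_half_mul_rpow_le_and_le {φ r : ℝ → ℝ} {c p : ℝ} (hc : 0 < c)
    (hφ : ∀ x > 0, φ x = c * x ^ p + r x) (hr : Tendsto (fun x => r x / x ^ p) atTop (𝓝 0)) :
    ∀ᶠ x in atTop, c / 2 * x ^ p ≤ φ x ∧ φ x ≤ 3 * c / 2 * x ^ p := by
  filter_upwards [hr.eventually (Ioo_mem_nhds (neg_lt_zero.2 (half_pos hc)) (half_pos hc)),
    eventually_gt_atTop 0] with x ⟨hlo, hhi⟩ hx
  have hxp := Real.rpow_pos_of_pos hx p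
  rw [lt_div_iff₀ hxp] at hlo
  rw [div_lt_iff₀ hxp] at hhi
  rw [hφ x hx]
  constructor <;> linarith

lemma le_three_mul_two_rpow_abs_mul {φ : ℝ → ℝ} {c p s t : ℝ} (hc : 0 < c) (hs : 0 < s)
    (ht : 0 < t) (hst : s ≤ 2 * t) (hts : t ≤ 2 * s) (hφs : φ s ≤ 3 * c / 2 * s ^ p)
    (hφt : c / 2 * t ^ p ≤ φ t) : φ s ≤ 3 * 2 ^ |p| * φ t := calc
  φ s ≤ 3 * c / 2 * s ^ p := hφs
  _ ≤ 3 * c / 2 * (2 ^ |p| * t ^ p) := by gcongr; exact rpow_le_two_rpow_abs_mul_rpow p hs ht hst hts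
  _ = 3 * 2 ^ |p| * (c / 2 * t ^ p) := by ring
  _ ≤ 3 * 2 ^ |p| * φ t := by gcongr

theorem abs_sub_newton_step_le {f f' f'' : ℝ → ℝ} {x γ A B : ℝ} (hxγ : x ≤ γ)
    (hf : ∀ t ∈ Icc x γ, HasDerivAt f (f' t) t) (hf' : ∀ t ∈ Icc x γ, HasDerivAt f' (f'' t) t)
    (hpos : ∀ t ∈ Icc x γ, 0 < f' t) (hA : ∀ t ∈ Icc x γ, f' γ ≤ A * f' t)
    (hB : ∀ t ∈ Icc x γ, 0 ≤ f'' t ∧ f'' t ≤ B * f'' γ) :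
    |x - (γ - (f γ - f x) / f' γ)| ≤ A ^ 2 * B * (f γ - f x) ^ 2 * f'' γ / f' γ ^ 3 := by
  rcases hxγ.eq_or_lt with rfl | hlt
  · simp
  obtain ⟨ξ, hξ, hξeq⟩ := exists_hasDerivAt_eq_slope f f' hlt
    (fun t ht => (hf t ht).continuousAt.continuousWithinAt)
    (fun t ht => hf t (Ioo_subset_Icc_self ht))
  have hξγ : Icc ξ γ ⊆ Icc x γ := Icc_subset_Icc_left hξ.1.le
  obtain ⟨ζ, hζ, hζeq⟩ := exists_hasDerivAt_eq_slope f' f'' hξ.2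
    (fun t ht => (hf' t (hξγ ht)).continuousAt.continuousWithinAt)
    (fun t ht => hf' t (hξγ (Ioo_subset_Icc_self ht)))
  have hζmem : ζ ∈ Icc x γ := ⟨hξ.1.le.trans hζ.1.le, hζ.2.le⟩
  have hγmem : γ ∈ Icc x γ := ⟨hlt.le, le_rfl⟩
  set d := γ - x
  set η := f γ - f x
  set m := f' γ
  have hd : 0 < d := sub_pos.2 hlt
  have hm : 0 < m := hpos γ hγmem
  have hs : 0 < f' ξ := hpos ξ (Ioo_subset_Icc_self hξ)
  have hη : η = f' ξ * d := by rw [hξeq]; field_simp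
  have hγξ : 0 < γ - ξ := sub_pos.2 hξ.2
  have hslope : m - f' ξ = f'' ζ * (γ - ξ) := by rw [hζeq]; field_simp
  have hBf : 0 ≤ B * f'' γ := (hB ζ hζmem).1.trans (hB ζ hζmem).2
  have hgap_nonneg : 0 ≤ m - f' ξ := hslope ▸ mul_nonneg (hB ζ hζmem).1 hγξ.le
  have hgap_le : m - f' ξ ≤ B * f'' γ * d := by
    rw [hslope]
    exact mul_le_mul (hB ζ hζmem).2 (by linarith [hξ.1]) hγξ.le hBf
  have hdη : m * d ≤ A * η := by
    rw [hη, ← mul_assoc]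
    exact mul_le_mul_of_nonneg_right (hA ξ (Ioo_subset_Icc_self hξ)) hd.le
  have herr : x - (γ - η / m) = -(d * (m - f' ξ) / m) := by
    rw [hη]; field_simp; ring
  calc |x - (γ - η / m)| = d * (m - f' ξ) / m := by
        rw [herr, abs_neg, abs_of_nonneg (by positivity)]
    _ ≤ d * (B * f'' γ * d) / m := by gcongr
    _ = B * f'' γ * (m * d) ^ 2 / m ^ 3 := by field_simp
    _ ≤ B * f'' γ * (A * η) ^ 2 / m ^ 3 := by gcongr
    _ = A ^ 2 * B * η ^ 2 * f'' γ / m ^ 3 := by ring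

section RpowBounds

variable {g g' g'' : ℝ → ℝ} {c₁ c₂ p r s₀ : ℝ}
  (hc₁ : 0 < c₁) (hs₀ : 0 < s₀)
  (hg : ∀ x ≥ s₀, HasDerivAt g (g' x) x)
  (hg' : ∀ x ≥ s₀, c₁ / 2 * x ^ p ≤ g' x ∧ g' x ≤ 3 * c₁ / 2 * x ^ p)

include hc₁ hs₀ hg'

lemma deriv_pos_of_rpow_bounds {x : ℝ} (hx : s₀ ≤ x) : 0 < g' x :=
  lt_of_lt_of_le (by have := hs₀.trans_le hx; positivity) (hg' x hx).1

include hg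

lemma strictMonoOn_Ici_of_rpow_bounds : StrictMonoOn g (Ici s₀) :=
  strictMonoOn_of_hasDerivWithinAt_pos (convex_Ici s₀)
    (fun x hx => (hg x hx).continuousAt.continuousWithinAt)
    (fun x hx => (hg x (interior_subset hx)).hasDerivWithinAt)
    (fun _ hx => deriv_pos_of_rpow_bounds hc₁ hs₀ hg' (interior_subset hx))

lemma abs_sub_newton_step_le_of_rpow_bounds (hc₂ : 0 < c₂)
    (hg'd : ∀ x ≥ s₀, HasDerivAt g' (g'' x) x)
    (hg'' : ∀ x ≥ s₀, c₂ / 2 * x ^ r ≤ g'' x ∧ g'' x ≤ 3 * c₂ / 2 * x ^ r)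
    {x γ : ℝ} (hγ : 2 * s₀ ≤ γ) (hx : γ / 2 ≤ x) (hxγ : x ≤ γ) :
    |x - (γ - (g γ - g x) / g' γ)| ≤
      (3 * 2 ^ |p|) ^ 2 * (3 * 2 ^ |r|) * (g γ - g x) ^ 2 * g'' γ / g' γ ^ 3 := by
  have hwindow : ∀ t ∈ Icc x γ, s₀ ≤ t ∧ γ ≤ 2 * t ∧ t ≤ 2 * γ := fun t ht =>
    ⟨by linarith [ht.1], by linarith [ht.1], by linarith [ht.2]⟩
  have hγs₀ : s₀ ≤ γ := by linarith
  have hγ₀ : 0 < γ := hs₀.trans_le hγs₀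
  refine abs_sub_newton_step_le hxγ (fun t ht => hg t (hwindow t ht).1)
    (fun t ht => hg'd t (hwindow t ht).1)
    (fun t ht => deriv_pos_of_rpow_bounds hc₁ hs₀ hg' (hwindow t ht).1)
    (fun t ht => ?_)
    (fun t ht => ⟨(deriv_pos_of_rpow_bounds hc₂ hs₀ hg'' (hwindow t ht).1).le, ?_⟩) <;>
  obtain ⟨hts₀, hγt, htγ⟩ := hwindow t ht <;>
  have ht₀ : 0 < t := hs₀.trans_le hts₀
  · exact le_three_mul_two_rpow_abs_mul hc₁ hγ₀ ht₀ hγt htγ (hg' γ hγs₀).2 (hg' t hts₀).1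
  · exact le_three_mul_two_rpow_abs_mul hc₂ ht₀ hγ₀ htγ hγt (hg'' t hts₀).2 (hg'' γ hγs₀).1

end RpowBounds

theorem inverse_expansion_general
    (q a : ℝ) (hq1 : 1 < q)
    (ha : 0 < a)
    (g g' g'' ρ ρ' ρ'' : ℝ → ℝ)
    (hgd1 : ∀ x > (0 : ℝ), HasDerivAt g (g' x) x)
    (hgd2 : ∀ x > (0 : ℝ), HasDerivAt g' (g'' x) x)
    (hρd1 : ∀ x > (0 : ℝ), HasDerivAt ρ (ρ' x) x)
    (hρd2 : ∀ x > (0 : ℝ), HasDerivAt ρ' (ρ'' x) x)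
    (hgform : ∀ x > (0 : ℝ), g x = a * x ^ q + ρ x)
    -- Hypothesis (H1)
    (H1_1 : Tendsto (fun s => ρ' s / s ^ (q - 1)) atTop (nhds 0))
    (H1_2 : Tendsto (fun s => ρ'' s / s ^ (q - 2)) atTop (nhds 0)) :
    ∃ s₀ > (0 : ℝ), StrictMonoOn g (Set.Ici s₀) ∧
      ∃ γ₀ : ℝ, 2 * s₀ ≤ γ₀ ∧ ∃ C > (0 : ℝ), ∀ γ ≥ γ₀, ∀ η : ℝ,
        0 ≤ η → η ≤ g γ - g (γ / 2) →
        ∃ x : ℝ, s₀ ≤ x ∧ g x = g γ - η ∧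
          |x - (γ - η / g' γ)| ≤ C * η ^ 2 * g'' γ / (g' γ) ^ 3 := by
  have hg' := eq_mul_rpow_sub_one_add_of_hasDerivAt hgform hgd1 hρd1
  have hg'' : ∀ x > 0, g'' x = a * q * (q - 1) * x ^ (q - 2) + ρ'' x := by
    simpa only [sub_sub, one_add_one_eq_two] using
      eq_mul_rpow_sub_one_add_of_hasDerivAt hg' hgd2 hρd2
  have hc₂ : 0 < a * q * (q - 1) := by have := sub_pos.2 hq1; positivity
  obtain ⟨N, hN⟩ := eventually_atTop.1
    ((eventually_half_mul_rpow_le_and_le (by positivity) hg' H1_1).and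
      (eventually_half_mul_rpow_le_and_le hc₂ hg'' H1_2))
  set s₀ := max N 1
  have hs₀ : 0 < s₀ := zero_lt_one.trans_le (le_max_right N 1)
  have hN₀ : ∀ x ≥ s₀, N ≤ x := fun x hx => (le_max_left N 1).trans hx
  have hpos : ∀ x ≥ s₀, x > 0 := fun x hx => hs₀.trans_le hx
  have hgd : ∀ x ≥ s₀, HasDerivAt g (g' x) x := fun x hx => hgd1 x (hpos x hx)
  have hg'b := fun x hx => (hN x (hN₀ x hx)).1
  refine ⟨s₀, hs₀, strictMonoOn_Ici_of_rpow_bounds (by positivity) hs₀ hgd hg'b, 2 * s₀, le_rfl,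
    (3 * 2 ^ |q - 1|) ^ 2 * (3 * 2 ^ |q - 2|), by positivity, fun γ hγ η hη0 hη1 => ?_⟩
  have hγ₂ : s₀ ≤ γ / 2 := by linarith
  obtain ⟨x, ⟨hx, hxγ⟩, hgx⟩ := intermediate_value_Icc (by linarith)
    (fun t ht => (hgd t (hγ₂.trans ht.1)).continuousAt.continuousWithinAt)
    (show g γ - η ∈ Icc (g (γ / 2)) (g γ) from ⟨by linarith, by linarith⟩)
  refine ⟨x, hγ₂.trans hx, hgx, ?_⟩
  obtain rfl : η = g γ - g x := by linarith
  exact abs_sub_newton_step_le_of_rpow_bounds (by positivity) hs₀ hgd hg'b hc₂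
    (fun x hx => hgd2 x (hpos x hx)) (fun x hx => (hN x (hN₀ x hx)).2) hγ hx hxγ

/-- Proposition 3.2 (iii): under (H1), for large `γ` and `0 ≤ η ≤ g(γ) - g(γ/2)`,
the inverse value `g⁻¹(g(γ) - η)` (i.e. the unique `x ≥ s₀` with `g(x) = g(γ) - η`)
satisfies `g⁻¹(g(γ)-η) = γ - η/g'(γ) + O(η² g''(γ)/g'(γ)³)`. -/
theorem inverse_expansion
    (n : ℕ) (hn : 2 ≤ n) (q a : ℝ) (hq1 : 1 < q) (hq2 : q ≤ (n : ℝ) / ((n : ℝ) - 1))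
    (ha : 0 < a)
    (g g' g'' g''' ρ ρ' ρ'' ρ''' : ℝ → ℝ)
    (hgd1 : ∀ x > (0 : ℝ), HasDerivAt g (g' x) x)
    (hgd2 : ∀ x > (0 : ℝ), HasDerivAt g' (g'' x) x)
    (hgd3 : ∀ x > (0 : ℝ), HasDerivAt g'' (g''' x) x)
    (hgc : ContinuousOn g''' (Set.Ioi 0))
    (hρd1 : ∀ x > (0 : ℝ), HasDerivAt ρ (ρ' x) x)
    (hρd2 : ∀ x > (0 : ℝ), HasDerivAt ρ' (ρ'' x) x)
    (hρd3 : ∀ x > (0 : ℝ), HasDerivAt ρ'' (ρ''' x) x)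
    (hρc : ContinuousOn ρ''' (Set.Ioi 0))
    (hgform : ∀ x > (0 : ℝ), g x = a * x ^ q + ρ x)
    -- Hypothesis (H1)
    (H1_0 : Tendsto (fun s => ρ s / s ^ q) atTop (nhds 0))
    (H1_1 : Tendsto (fun s => ρ' s / s ^ (q - 1)) atTop (nhds 0))
    (H1_2 : Tendsto (fun s => ρ'' s / s ^ (q - 2)) atTop (nhds 0))
    (H1_3 : Tendsto (fun s => ρ''' s / s ^ (q - 3)) atTop (nhds 0)) :
    ∃ s₀ > (0 : ℝ), StrictMonoOn g (Set.Ici s₀) ∧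
      ∃ γ₀ : ℝ, 2 * s₀ ≤ γ₀ ∧ ∃ C > (0 : ℝ), ∀ γ ≥ γ₀, ∀ η : ℝ,
        0 ≤ η → η ≤ g γ - g (γ / 2) →
        ∃ x : ℝ, s₀ ≤ x ∧ g x = g γ - η ∧
          |x - (γ - η / g' γ)| ≤ C * η ^ 2 * g'' γ / (g' γ) ^ 3 :=
  inverse_expansion_general q a hq1 ha g g' g'' ρ ρ' ρ'' hgd1 hgd2 hρd1 hρd2 hgform H1_1 H1_2
end

section
/- Let n ≥ 2 be an integer, a > 0, and define F(x,b) = xⁿ − a·x^{n−1} − b. Then there exist ε₀ > 0, C > 0 and a C^∞ function X : (−ε₀, ε₀) → ℝ such that X(0) = a, F(X(b), b) = 0 for all |b| < ε₀, and |X(b) − a − b/a^{n−1}| ≤ C·b²/a^{2n−1} for all |b| < ε₀. -/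
open Set Topology Filter

/-- Quadratic bound: a `C²` function vanishing to first order at `0` is `O(b²)` near `0`. -/
lemma quad_bound_aux {h : ℝ → ℝ} (hh : ContDiffAt ℝ 2 h 0) (h0 : h 0 = 0)
    (h1 : HasDerivAt h 0 0) :
    ∃ ε > (0 : ℝ), ∃ M : ℝ, 0 ≤ M ∧ ∀ b : ℝ, |b| < ε → |h b| ≤ M * b ^ 2 := by
  obtain ⟨u, hu, hcu⟩ := hh.contDiffOn le_rfl (by intro hc; simp at hc)
  have hvo : IsOpen (interior u) := isOpen_interior
  have hv0 : (0 : ℝ) ∈ interior u := mem_interior_iff_mem_nhds.2 hu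
  have hcv : ContDiffOn ℝ 2 h (interior u) := hcu.mono interior_subset
  obtain ⟨r, hr, hball⟩ := Metric.isOpen_iff.mp hvo 0 hv0
  have hKv : Icc (-(r / 2)) (r / 2) ⊆ interior u := by
    intro x hx
    apply hball
    simp only [Metric.mem_ball, Real.dist_eq, sub_zero]
    have h1 := hx.1
    have h2 := hx.2
    rw [abs_lt]; constructor <;> linarith
  have hd1 : ContDiffOn ℝ 1 (deriv h) (interior u) := by
    apply hcv.deriv_of_isOpen hvo
    norm_num
  have hdiff : ∀ x ∈ interior u, DifferentiableAt ℝ (deriv h) x := fun x hx =>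
    ((hd1.differentiableOn one_ne_zero).differentiableAt (hvo.mem_nhds hx))
  have hcont2 : ContinuousOn (deriv (deriv h)) (interior u) :=
    hd1.continuousOn_deriv_of_isOpen hvo le_rfl
  obtain ⟨M, hM⟩ :=
    (isCompact_Icc (a := -(r / 2)) (b := r / 2)).exists_bound_of_continuousOn
      (hcont2.mono hKv)
  set M' := max M 0 with hM'def
  have hM'nonneg : 0 ≤ M' := le_max_right _ _
  have hM' : ∀ x ∈ Icc (-(r / 2)) (r / 2), ‖deriv (deriv h) x‖ ≤ M' := fun x hx =>
    (hM x hx).trans (le_max_left _ _)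
  have hderiv0 : deriv h 0 = 0 := h1.deriv
  have h0K : (0 : ℝ) ∈ Icc (-(r / 2)) (r / 2) := by
    constructor <;> [linarith; linarith]
  have step1 : ∀ s ∈ Icc (-(r / 2)) (r / 2), |deriv h s| ≤ M' * |s| := by
    intro s hs
    have := (convex_Icc (-(r / 2)) (r / 2)).norm_image_sub_le_of_norm_deriv_le
      (f := deriv h) (fun x hx => hdiff x (hKv hx)) hM' h0K hs
    simpa [hderiv0, Real.norm_eq_abs] using this
  refine ⟨r / 2, by positivity, M', hM'nonneg, ?_⟩
  intro b hb
  have hbK : Icc (-|b|) |b| ⊆ Icc (-(r / 2)) (r / 2) :=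
    Icc_subset_Icc (by linarith) hb.le
  have hdiffh : ∀ x ∈ Icc (-|b|) |b|, DifferentiableAt ℝ h x := fun x hx =>
    ((hcv.differentiableOn (by norm_num)).differentiableAt
      (hvo.mem_nhds (hKv (hbK hx))))
  have bound : ∀ x ∈ Icc (-|b|) |b|, ‖deriv h x‖ ≤ M' * |b| := by
    intro x hx
    have hx' : |x| ≤ |b| := abs_le.2 ⟨hx.1, hx.2⟩
    calc ‖deriv h x‖ ≤ M' * |x| := step1 x (hbK hx)
      _ ≤ M' * |b| := mul_le_mul_of_nonneg_left hx' hM'nonneg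
  have h0mem : (0 : ℝ) ∈ Icc (-|b|) |b| := by
    constructor <;> simp [abs_nonneg]
  have hbmem : b ∈ Icc (-|b|) |b| := ⟨neg_abs_le b, le_abs_self b⟩
  have key := (convex_Icc (-|b|) |b|).norm_image_sub_le_of_norm_deriv_le
    hdiffh bound h0mem hbmem
  have key' : |h b| ≤ M' * |b| * |b| := by
    simpa [h0, Real.norm_eq_abs] using key
  calc |h b| ≤ M' * |b| * |b| := key'
    _ = M' * b ^ 2 := by rw [mul_assoc, ← abs_mul, abs_mul_self, sq]

/-- Proposition 3.3: quantitative implicit-function expansion of the root near `x = a`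
of `F(x,b) = xⁿ - a x^{n-1} - b = 0`: there are `ε₀ > 0`, `C > 0` and a smooth
`X : (-ε₀,ε₀) → ℝ` with `X(0) = a`, `F(X(b),b) = 0` and
`|X(b) - a - b/a^{n-1}| ≤ C b²/a^{2n-1}` for `|b| < ε₀`. -/
theorem implicit_root_expansion (n : ℕ) (hn : 2 ≤ n) (a : ℝ) (ha : 0 < a) :
    ∃ ε₀ > (0 : ℝ), ∃ C > (0 : ℝ), ∃ X : ℝ → ℝ,
      ContDiffOn ℝ (⊤ : ℕ∞) X (Set.Ioo (-ε₀) ε₀) ∧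
      X 0 = a ∧
      ∀ b : ℝ, |b| < ε₀ →
        X b ^ n - a * X b ^ (n - 1) - b = 0 ∧
        |X b - a - b / a ^ (n - 1)| ≤ C * b ^ 2 / a ^ (2 * n - 1) := by
  set c : ℝ := a ^ (n - 1) with hc_def
  have hc : 0 < c := pow_pos ha _
  set g : ℝ → ℝ := fun s => s * (a + s) ^ (n - 1) with hg_def
  have hg0 : g 0 = 0 := by simp [hg_def]
  -- derivative of g at 0 is c
  have hgd : HasDerivAt g c 0 := by
    have h1 : HasDerivAt (fun s : ℝ => (a + s) ^ (n - 1))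
        ((n - 1 : ℕ) * (a + 0) ^ (n - 1 - 1) * 1) 0 :=
      (((hasDerivAt_id (0 : ℝ)).const_add a).pow (n - 1))
    have h2 : HasDerivAt (fun s : ℝ => s * (a + s) ^ (n - 1)) _ 0 := (hasDerivAt_id (0 : ℝ)).mul h1
    convert h2 using 1
    simp [hc_def]
  have hgc : ContDiff ℝ (⊤ : ℕ∞) g :=
    contDiff_id.mul ((contDiff_const.add contDiff_id).pow (n - 1))
  have hga : ContDiffAt ℝ (⊤ : ℕ∞) g 0 := hgc.contDiffAt
  have hfd : HasFDerivAt g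
      ((ContinuousLinearEquiv.unitsEquivAut ℝ (Units.mk0 c hc.ne')) : ℝ →L[ℝ] ℝ) 0 :=
    hgd.hasFDerivAt_equiv hc.ne'
  -- the local inverse t of g near 0
  set t : ℝ → ℝ := hga.localInverse hfd (by simp) with ht_def
  have H : HasStrictFDerivAt g
      ((ContinuousLinearEquiv.unitsEquivAut ℝ (Units.mk0 c hc.ne')) : ℝ →L[ℝ] ℝ) 0 :=
    hga.hasStrictFDerivAt' hfd (by simp)
  have ht0 : t 0 = 0 := by
    have := hga.localInverse_apply_image hfd (by simp)
    rwa [hg0] at this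
  have htC : ContDiffAt ℝ (⊤ : ℕ∞) t 0 := by
    have := hga.to_localInverse hfd (by simp)
    rwa [hg0] at this
  have hrinv : ∀ᶠ y in 𝓝 (0 : ℝ), g (t y) = y := by
    have := H.eventually_right_inverse
    rwa [hg0] at this
  -- strict derivative of t at 0 is c⁻¹
  have hgs : HasStrictDerivAt g c 0 := hga.hasStrictDerivAt' hgd (by simp)
  have htd : HasStrictDerivAt t c⁻¹ 0 := by
    have := hgs.to_localInverse (hf' := hc.ne')
    rwa [hg0] at this
  -- quadratic bound for h b = t b - b * c⁻¹
  have hhC : ContDiffAt ℝ 2 (fun b => t b - b * c⁻¹) 0 :=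
    (htC.of_le ((show (2 : WithTop ℕ∞) = ((2 : ℕ∞) : WithTop ℕ∞) by norm_cast).trans_le (WithTop.coe_le_coe.mpr le_top))).sub ((contDiff_id.mul contDiff_const).contDiffAt)
  have hh0 : (fun b => t b - b * c⁻¹) 0 = 0 := by simp [ht0]
  have hh1 : HasDerivAt (fun b => t b - b * c⁻¹) 0 0 := by
    have : HasDerivAt (fun b => t b - b * c⁻¹) _ 0 :=
      htd.hasDerivAt.sub ((hasDerivAt_id (0 : ℝ)).mul_const c⁻¹)
    simpa using this
  obtain ⟨ε₂, hε₂, M, hMnonneg, hMbound⟩ := quad_bound_aux hhC hh0 hh1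
  -- neighborhood on which t is smooth
  obtain ⟨u, hu, hut⟩ := (show ContDiffAt ℝ (⊤ : WithTop ℕ∞) t 0 by
      have := ((contDiff_id.mul ((contDiff_const.add contDiff_id).pow (n - 1)) :
        ContDiff ℝ (⊤ : WithTop ℕ∞) g).contDiffAt (x := 0)).to_localInverse hfd (by simp)
      rwa [show (id 0 * (a + 0) ^ (n - 1) : ℝ) = 0 by simp] at this).contDiffOn (m := ((⊤ : ℕ∞) : WithTop ℕ∞)) le_top (fun _ => rfl)
  obtain ⟨ε₃, hε₃, hball⟩ := Metric.mem_nhds_iff.mp hu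
  -- neighborhood on which g (t y) = y
  obtain ⟨ε₁, hε₁, hrinv'⟩ := Metric.eventually_nhds_iff.mp hrinv
  refine ⟨min ε₁ (min ε₂ ε₃), by positivity, (M + 1) * a ^ (2 * n - 1), by positivity,
    fun b => a + t b, ?_, by simp [ht0], ?_⟩
  · -- smoothness
    apply ContDiffOn.add contDiffOn_const
    apply hut.mono
    intro x hx
    apply hball
    simp only [Metric.mem_ball, Real.dist_eq, sub_zero]
    have h1 := hx.1
    have h2 := hx.2
    have habs : |x| < min ε₁ (min ε₂ ε₃) := abs_lt.mpr ⟨h1, h2⟩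
    exact lt_of_lt_of_le habs (le_trans (min_le_right _ _) (min_le_right _ _))
  · intro b hb
    have hb1 : |b| < ε₁ := lt_of_lt_of_le hb (min_le_left _ _)
    have hb2 : |b| < ε₂ := lt_of_lt_of_le hb (le_trans (min_le_right _ _) (min_le_left _ _))
    have hginv : g (t b) = b := by
      have hd : dist b (0 : ℝ) < ε₁ := by simpa [Real.dist_eq] using hb1
      exact hrinv' hd
    constructor
    · -- the equation
      have hkey : t b * (a + t b) ^ (n - 1) = b := hginv
      have hn1 : n - 1 + 1 = n := by omega
      have hpow : (a + t b) ^ n = (a + t b) ^ (n - 1) * (a + t b) := by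
        rw [← pow_succ, hn1]
      rw [hpow]
      nlinarith [hkey]
    · -- the quantitative bound
      have hq := hMbound b hb2
      have heq : a + t b - a - b / a ^ (n - 1) = t b - b * c⁻¹ := by
        rw [div_eq_mul_inv, ← hc_def]; ring
      rw [heq]
      have hrhs : (M + 1) * a ^ (2 * n - 1) * b ^ 2 / a ^ (2 * n - 1)
          = (M + 1) * b ^ 2 := by
        have ha2 : (a : ℝ) ^ (2 * n - 1) ≠ 0 := (pow_pos ha _).ne'
        field_simp
      rw [hrhs]
      calc |t b - b * c⁻¹| ≤ M * b ^ 2 := hq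
        _ ≤ (M + 1) * b ^ 2 := by nlinarith [sq_nonneg b]
end

section
/- Let n ≥ 2 and k ≥ 1 be integers, let g' > 0 and T₁ ∈ ℝ, and set X(t) = e^{(T₁−t)/(n−1)} and z'(t) = (n/((n−1)·g'))·X(t)/(1+X(t)). With α_k = 1 + 1/2 + ⋯ + 1/k, the following hold: (a) α_k = −Σ_{r=1}^{k} (−1)^r·binom(k,r)/r; (b) Σ_{r=0}^{k} (−1)^r·binom(k,r)/(r+2) = 1/((k+1)·(k+2)); (c) for every t ∈ ℝ: ∫_t^∞ z'(s)^{k+1} ds = (n/((n−1)·g'))^{k+1}·(n−1)·[−α_k + log(1+X(t)) − Σ_{r=1}^{k} (−1)^r·binom(k,r)/(r·(1+X(t))^r)]. -/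
/-!
Substituting `u = 1 + X(s)` with `X(s) = e^{(T₁-s)/a}`, `dX = -X ds / a`, turns the integral into
`a ∫_1^{1 + X(t)} (u - 1)^k / u^(k+1) du`. Expanding `(u - 1)^k` binomially gives the primitive
`log u - ∑_{r=1}^k (-1)^r C(k,r) / (r u^r)`, whose value at `u = 1` is the harmonic number `α_k`
by (a). Both (a) and (b) reduce, via the absorption identity `C(k,r)/(r+1) = C(k+1,r+1)/(k+1)`,
to the vanishing of the alternating sum of a row of Pascal's triangle.
-/

open MeasureTheory Finset Real Filter Topology

theorem Finset.sum_Icc_one_eq_sum_range {M : Type*} [AddCommMonoid M] (f : ℕ → M) (k : ℕ) :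
    ∑ r ∈ Icc 1 k, f r = ∑ r ∈ range k, f (r + 1) := by
  rw [← Ico_add_one_right_eq_Icc, sum_Ico_eq_sum_range]
  simp [add_comm]

theorem sum_range_neg_one_pow_mul_choose_succ {R : Type*} [CommRing R] {n : ℕ} (hn : n ≠ 0) :
    ∑ r ∈ range n, (-1 : R) ^ r * n.choose (r + 1) = 1 := by
  have h := add_pow (-1 : R) 1 n
  rw [neg_add_cancel, zero_pow hn, sum_range_succ'] at h
  simp only [one_pow, mul_one, pow_succ, Nat.choose_zero_right, Nat.cast_one, pow_zero,
    mul_neg_one, neg_mul, sum_neg_distrib] at h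
  linear_combination h

section BinomialSums

variable {K : Type*} [Field K] [CharZero K]

theorem Nat.cast_choose_div_add_one (k r : ℕ) :
    (k.choose r : K) / (r + 1) = (k + 1).choose (r + 1) / (k + 1) := by
  rw [div_eq_div_iff (Nat.cast_add_one_ne_zero r) (Nat.cast_add_one_ne_zero k), mul_comm]
  exact_mod_cast Nat.add_one_mul_choose_eq k r

theorem sum_range_neg_one_pow_mul_choose_div_add_one (k : ℕ) :
    ∑ r ∈ range (k + 1), (-1 : K) ^ r * k.choose r / (r + 1) = 1 / (k + 1) := by
  simp_rw [mul_div_assoc, Nat.cast_choose_div_add_one, ← mul_div_assoc, ← sum_div]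
  rw [sum_range_neg_one_pow_mul_choose_succ k.succ_ne_zero]

theorem sum_range_neg_one_pow_mul_choose_div_add_two (k : ℕ) :
    ∑ r ∈ range (k + 1), (-1 : K) ^ r * k.choose r / (r + 2) = 1 / ((k + 1) * (k + 2)) := by
  have hr (r : ℕ) : (k.choose r : K) / (r + 2) =
      (k + 1).choose (r + 1) / (k + 1) * (1 - 1 / (r + 2)) := by
    have h2 : (r : K) + 2 ≠ 0 := by exact_mod_cast (r + 1).succ_ne_zero
    rw [← Nat.cast_choose_div_add_one]
    field_simp
    ring
  have hB : ∑ r ∈ range (k + 1), (-1 : K) ^ r * (k + 1).choose (r + 1) / (r + 2) =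
      1 - 1 / (k + 2) := by
    have hS := sum_range_neg_one_pow_mul_choose_div_add_one (K := K) (k + 1)
    rw [sum_range_succ'] at hS
    simp only [pow_succ, mul_neg, mul_one, neg_mul, neg_div, sum_neg_distrib, Nat.cast_add,
      Nat.cast_one, Nat.cast_zero, add_assoc, one_add_one_eq_two, pow_zero, Nat.choose_zero_right,
      zero_add, div_one] at hS
    linear_combination -hS
  have hk : (k : K) + 1 ≠ 0 := Nat.cast_add_one_ne_zero k
  have hk2 : (k : K) + 2 ≠ 0 := by exact_mod_cast (k + 1).succ_ne_zero
  calc ∑ r ∈ range (k + 1), (-1 : K) ^ r * k.choose r / (r + 2)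
      = (∑ r ∈ range (k + 1), (-1 : K) ^ r * (k + 1).choose (r + 1) -
          ∑ r ∈ range (k + 1), (-1 : K) ^ r * (k + 1).choose (r + 1) / (r + 2)) / (k + 1) := by
        rw [← sum_sub_distrib, sum_div]
        refine sum_congr rfl fun r _ => ?_
        rw [mul_div_assoc, hr]
        ring
    _ = 1 / ((k + 1) * (k + 2)) := by
        rw [sum_range_neg_one_pow_mul_choose_succ k.succ_ne_zero, hB]
        field_simp
        ring

theorem sum_range_one_div_add_one_eq_neg_sum_Icc (k : ℕ) :
    ∑ j ∈ range k, (1 : K) / (j + 1) = -∑ r ∈ Icc 1 k, (-1 : K) ^ r * k.choose r / r := by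
  rw [sum_Icc_one_eq_sum_range, ← sum_neg_distrib]
  induction k with
  | zero => simp
  | succ k ih =>
    have hpascal (r : ℕ) : -((-1 : K) ^ (r + 1) * (k + 1).choose (r + 1) / ↑(r + 1)) =
        (-1) ^ r * k.choose r / (r + 1) - (-1) ^ (r + 1) * k.choose (r + 1) / ↑(r + 1) := by
      push_cast [Nat.choose_succ_succ]
      ring
    rw [sum_range_succ, ih]
    simp_rw [hpascal, sum_sub_distrib, sum_range_neg_one_pow_mul_choose_div_add_one,
      sum_range_succ _ k, Nat.choose_succ_self, Nat.cast_zero, mul_zero, zero_div, add_zero,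
      sum_neg_distrib]
    ring

end BinomialSums

theorem sum_range_neg_one_pow_mul_choose_div_pow_succ {K : Type*} [Field K] {u : K}
    (hu : u ≠ 0) (k : ℕ) :
    ∑ r ∈ range (k + 1), (-1 : K) ^ r * k.choose r / u ^ (r + 1) =
      (u - 1) ^ k / u ^ (k + 1) := by
  have h : (u - 1) / u = -u⁻¹ + 1 := by
    field_simp
    ring
  rw [pow_succ, ← div_div, ← div_pow, h, add_pow, div_eq_mul_inv, sum_mul]
  refine sum_congr rfl fun r _ => ?_
  rw [one_pow, mul_one, neg_pow u⁻¹, inv_pow, pow_succ]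
  field_simp

noncomputable def binomialPrimitive (k : ℕ) (u : ℝ) : ℝ :=
  log u - ∑ r ∈ Icc 1 k, (-1) ^ r * k.choose r / (r * u ^ r)

theorem hasDerivAt_binomialPrimitive (k : ℕ) {u : ℝ} (hu : u ≠ 0) :
    HasDerivAt (binomialPrimitive k) ((u - 1) ^ k / u ^ (k + 1)) u := by
  have hterm : ∀ r ∈ Icc 1 k, HasDerivAt (fun u : ℝ => (-1) ^ r * k.choose r / (r * u ^ r))
      (-((-1) ^ r * k.choose r / u ^ (r + 1))) u := by
    intro r hr
    obtain ⟨m, rfl⟩ : ∃ m, r = m + 1 := ⟨r - 1, by grind⟩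
    refine ((hasDerivAt_const u _).div ((hasDerivAt_pow (m + 1) u).const_mul _)
      (by positivity)).congr_deriv ?_
    rw [Nat.add_sub_cancel]
    field_simp
    ring
  refine ((hasDerivAt_log hu).sub (HasDerivAt.fun_sum hterm)).congr_deriv ?_
  rw [← sum_range_neg_one_pow_mul_choose_div_pow_succ hu, sum_range_succ', sum_neg_distrib,
    sub_neg_eq_add, sum_Icc_one_eq_sum_range]
  simp [add_comm]

theorem integral_Ioi_exp_div_one_add_exp_pow {a : ℝ} (ha : 0 < a) (T₁ t : ℝ) (k : ℕ) :
    ∫ s in Set.Ioi t, (exp ((T₁ - s) / a) / (1 + exp ((T₁ - s) / a))) ^ (k + 1) =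
      a * (binomialPrimitive k (1 + exp ((T₁ - t) / a)) - binomialPrimitive k 1) := by
  set X : ℝ → ℝ := fun s => exp ((T₁ - s) / a)
  have hX (s : ℝ) : HasDerivAt X (-(X s / a)) s := by
    refine (((hasDerivAt_id' s).const_sub T₁).div_const a).exp.congr_deriv ?_
    simp only [X]
    ring
  have hF (s : ℝ) : HasDerivAt (fun s => -a * binomialPrimitive k (1 + X s))
      ((X s / (1 + X s)) ^ (k + 1)) s := by
    have h1 : 1 + X s ≠ 0 := by positivity
    refine (((hasDerivAt_binomialPrimitive k h1).comp s ((hX s).const_add 1)).const_mul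
      (-a)).congr_deriv ?_
    rw [add_sub_cancel_left, div_pow, pow_succ (X s)]
    field_simp
  have hX0 : Tendsto X atTop (𝓝 0) :=
    tendsto_exp_atBot.comp <|
      (tendsto_atBot_add_const_left _ T₁ tendsto_neg_atTop_atBot).atBot_div_const ha
  have hlim : Tendsto (fun s => -a * binomialPrimitive k (1 + X s)) atTop
      (𝓝 (-a * binomialPrimitive k 1)) := by
    have h1X : Tendsto (fun s => 1 + X s) atTop (𝓝 1) := by simpa using hX0.const_add 1
    exact ((hasDerivAt_binomialPrimitive k one_ne_zero).continuousAt.tendsto.comp h1X).const_mul _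
  rw [integral_Ioi_of_hasDerivAt_of_nonneg' (fun s _ => hF s) (fun s _ => by positivity) hlim]
  ring

theorem comparison_integrals_general
    (n k : ℕ) (hn : 2 ≤ n) (g' T₁ : ℝ) :
    -- (a) α_k = -∑_{r=1}^k (-1)^r C(k,r)/r
    ((∑ j ∈ Finset.range k, (1 : ℝ) / (j + 1)) =
      -∑ r ∈ Finset.Icc 1 k, (-1 : ℝ) ^ r * (k.choose r : ℝ) / r) ∧
    -- (b) ∑_{r=0}^k (-1)^r C(k,r)/(r+2) = 1/((k+1)(k+2))
    ((∑ r ∈ Finset.range (k + 1), (-1 : ℝ) ^ r * (k.choose r : ℝ) / (r + 2)) =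
      1 / (((k : ℝ) + 1) * ((k : ℝ) + 2))) ∧
    -- (c) the improper integral of z'^{k+1}
    (∀ t : ℝ,
      (∫ s in Set.Ioi t,
        ((n : ℝ) / (((n : ℝ) - 1) * g') * Real.exp ((T₁ - s) / ((n : ℝ) - 1))
          / (1 + Real.exp ((T₁ - s) / ((n : ℝ) - 1)))) ^ (k + 1)) =
      ((n : ℝ) / (((n : ℝ) - 1) * g')) ^ (k + 1) * ((n : ℝ) - 1) *
        (-(∑ j ∈ Finset.range k, (1 : ℝ) / (j + 1))
          + Real.log (1 + Real.exp ((T₁ - t) / ((n : ℝ) - 1)))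
          - ∑ r ∈ Finset.Icc 1 k, (-1 : ℝ) ^ r * (k.choose r : ℝ)
              / (r * (1 + Real.exp ((T₁ - t) / ((n : ℝ) - 1))) ^ r))) := by
  have harmonic_eq := sum_range_one_div_add_one_eq_neg_sum_Icc (K := ℝ) k
  refine ⟨harmonic_eq, sum_range_neg_one_pow_mul_choose_div_add_two k, fun t => ?_⟩
  have ha : (0 : ℝ) < n - 1 := by
    have : (2 : ℝ) ≤ n := by exact_mod_cast hn
    linarith
  have hP1 : binomialPrimitive k 1 = ∑ j ∈ Finset.range k, (1 : ℝ) / (j + 1) := by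
    simp only [binomialPrimitive, log_one, one_pow, mul_one, zero_sub, harmonic_eq]
  conv_lhs => enter [2, s]; rw [mul_div_assoc, mul_pow]
  rw [integral_const_mul, integral_Ioi_exp_div_one_add_exp_pow ha, hP1, binomialPrimitive]
  ring

/-- Lemma 3.4: binomial-harmonic identities and an explicit evaluation of the improper
integral of powers of the comparison function
`z'(t) = (n/((n-1)g')) X(t)/(1+X(t))` with `X(t) = e^{(T₁-t)/(n-1)}`. -/
theorem comparison_integrals
    (n k : ℕ) (hn : 2 ≤ n) (hk : 1 ≤ k) (g' T₁ : ℝ) (hg' : 0 < g') :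
    -- (a) α_k = -∑_{r=1}^k (-1)^r C(k,r)/r
    ((∑ j ∈ Finset.range k, (1 : ℝ) / (j + 1)) =
      -∑ r ∈ Finset.Icc 1 k, (-1 : ℝ) ^ r * (k.choose r : ℝ) / r) ∧
    -- (b) ∑_{r=0}^k (-1)^r C(k,r)/(r+2) = 1/((k+1)(k+2))
    ((∑ r ∈ Finset.range (k + 1), (-1 : ℝ) ^ r * (k.choose r : ℝ) / (r + 2)) =
      1 / (((k : ℝ) + 1) * ((k : ℝ) + 2))) ∧
    -- (c) the improper integral of z'^{k+1}
    (∀ t : ℝ,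
      (∫ s in Set.Ioi t,
        ((n : ℝ) / (((n : ℝ) - 1) * g') * Real.exp ((T₁ - s) / ((n : ℝ) - 1))
          / (1 + Real.exp ((T₁ - s) / ((n : ℝ) - 1)))) ^ (k + 1)) =
      ((n : ℝ) / (((n : ℝ) - 1) * g')) ^ (k + 1) * ((n : ℝ) - 1) *
        (-(∑ j ∈ Finset.range k, (1 : ℝ) / (j + 1))
          + Real.log (1 + Real.exp ((T₁ - t) / ((n : ℝ) - 1)))
          - ∑ r ∈ Finset.Icc 1 k, (-1 : ℝ) ^ r * (k.choose r : ℝ)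
              / (r * (1 + Real.exp ((T₁ - t) / ((n : ℝ) - 1))) ^ r))) :=
  comparison_integrals_general n k hn g' T₁
end

section
/- For every t ≥ T̃ the following hold: (i) y(t) ≤ z(t); (ii) g(y(t)) ≥ g − n·log(1 + X(t)) = g + g'·(z(t) − γ); (iii) g(y(t)) − t ≤ ψ(y(t)). -/
/-!
Write `k = n - 1`, `v = y'` and `A = e^{g(y) - t}`, so that `(v^k)' = -A`. The energies
`v^k - A - k/(k+1) · c · v^(k+1)` with `c = g'(y)` and with `c = g'(γ)` are monotone and vanish at
infinity, which gives `A ≤ v^k - k/(k+1) · g'(y) v^(k+1)` and `v^k - κ v^(k+1) ≤ A`, where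
`κ = k/(k+1) · g'(γ)`. The slope `ζ = z' = X / (κ (1 + X))` of the profile solves
`(ζ^k)' = -(ζ^k - κ ζ^(k+1))` exactly, so the two energy inequalities make both `ζ^k - v^k` and
`(g'(y) v)^k - (g'(γ) ζ)^k` satisfy `d' ≥ -d` wherever `d > 0`; as `e^t d → 0`, both stay
nonpositive. Thus `z' ≤ y'` and `(g ∘ y)' ≤ g'(γ) z'`, and integrating from `t` to `∞` gives (i)
and (ii); (iii) follows from (i) and `log X ≤ log (1 + X)`.
-/

open Filter Real Set Topology

theorem monotoneOn_Ici_of_hasDerivAt_nonneg {f f' : ℝ → ℝ} {a : ℝ}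
    (hf : ∀ t ≥ a, HasDerivAt f (f' t) t) (hf' : ∀ t > a, 0 ≤ f' t) :
    MonotoneOn f (Ici a) :=
  monotoneOn_of_hasDerivWithinAt_nonneg (convex_Ici a)
    (fun t ht => (hf t ht).continuousAt.continuousWithinAt)
    (fun t ht => (hf t (interior_subset ht)).hasDerivWithinAt)
    (fun t ht => hf' t (by simpa using ht))

theorem le_of_tendsto_of_hasDerivAt_nonneg {f f' : ℝ → ℝ} {a L : ℝ}
    (hf : ∀ t ≥ a, HasDerivAt f (f' t) t) (hf' : ∀ t ≥ a, 0 ≤ f' t)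
    (hL : Tendsto f atTop (𝓝 L)) : ∀ t ≥ a, f t ≤ L := fun t ht =>
  ge_of_tendsto hL <| (eventually_ge_atTop t).mono fun _ hs =>
    monotoneOn_Ici_of_hasDerivAt_nonneg hf (fun s hs => hf' s hs.le) ht (ht.trans hs) hs

theorem ge_of_tendsto_of_hasDerivAt_nonpos {f f' : ℝ → ℝ} {a L : ℝ}
    (hf : ∀ t ≥ a, HasDerivAt f (f' t) t) (hf' : ∀ t ≥ a, f' t ≤ 0)
    (hL : Tendsto f atTop (𝓝 L)) : ∀ t ≥ a, L ≤ f t := fun t ht =>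
  neg_le_neg_iff.1 <| le_of_tendsto_of_hasDerivAt_nonneg (fun s hs => (hf s hs).neg)
    (fun s hs => neg_nonneg.2 (hf' s hs)) hL.neg t ht

theorem le_of_hasDerivAt_nonneg_of_pos {φ φ' : ℝ → ℝ} {a : ℝ}
    (hφ : ∀ t ≥ a, HasDerivAt φ (φ' t) t) (hφ' : ∀ t ≥ a, 0 < φ t → 0 ≤ φ' t)
    (ha : 0 < φ a) : ∀ t ≥ a, φ a ≤ φ t := by
  have hpos : ∀ s ≥ a, 0 < φ s := by
    by_contra! ⟨s, has, hs⟩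
    have hcont : ContinuousOn φ (Icc a s) := fun r hr =>
      (hφ r hr.1).continuousAt.continuousWithinAt
    obtain ⟨b, ⟨⟨hab, hbs⟩, hb⟩, hleast⟩ :=
      (isCompact_Icc.of_isClosed_subset (hcont.preimage_isClosed_of_isClosed isClosed_Icc
        isClosed_Iic) inter_subset_left).exists_isLeast ⟨s, ⟨has, le_rfl⟩, hs⟩
    have hmono : MonotoneOn φ (Icc a b) :=
      monotoneOn_of_hasDerivWithinAt_nonneg (convex_Icc a b)
        (fun r hr => (hφ r hr.1).continuousAt.continuousWithinAt)
        (fun r hr => (hφ r (interior_subset hr).1).hasDerivWithinAt)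
        (fun r hr => by
          rw [interior_Icc] at hr
          refine hφ' r hr.1.le (lt_of_not_ge fun hr' => ?_)
          exact (hleast ⟨⟨hr.1.le, hr.2.le.trans hbs⟩, hr'⟩).not_gt hr.2)
    exact (ha.trans_le (hmono ⟨le_rfl, hab⟩ ⟨hab, le_rfl⟩ hab)).not_ge hb
  exact fun t ht => monotoneOn_Ici_of_hasDerivAt_nonneg hφ
    (fun s hs => hφ' s hs.le (hpos s hs.le)) self_mem_Ici ht ht

theorem nonpos_of_add_deriv_nonneg_of_tendsto {d d' : ℝ → ℝ} {a : ℝ}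
    (hd : ∀ t ≥ a, HasDerivAt d (d' t) t) (hd' : ∀ t ≥ a, 0 < d t → 0 ≤ d t + d' t)
    (hlim : Tendsto (fun t => exp t * d t) atTop (𝓝 0)) : ∀ t ≥ a, d t ≤ 0 := by
  intro t₀ ht₀
  by_contra! hpos
  have hφ : ∀ t ≥ t₀, HasDerivAt (fun s => exp s * d s) (exp t * (d t + d' t)) t := fun t ht =>
    ((hasDerivAt_exp t).mul (hd t (ht₀.trans ht))).congr_deriv (by ring)
  have hφ' : ∀ t ≥ t₀, 0 < exp t * d t → 0 ≤ exp t * (d t + d' t) := fun t ht h =>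
    mul_nonneg (exp_pos t).le (hd' t (ht₀.trans ht) (pos_of_mul_pos_right h (exp_pos t).le))
  have hbound := le_of_hasDerivAt_nonneg_of_pos hφ hφ' (mul_pos (exp_pos t₀) hpos)
  have : exp t₀ * d t₀ ≤ 0 :=
    ge_of_tendsto hlim ((eventually_ge_atTop t₀).mono fun t ht => hbound t ht)
  exact this.not_gt (mul_pos (exp_pos t₀) hpos)

theorem HasDerivAt.pow_succ_of_pow {u : ℝ → ℝ} {k : ℕ} {w t : ℝ} (hk : k ≠ 0)
    (hu : ∀ᶠ s in 𝓝 t, 0 < u s) (h : HasDerivAt (fun s => u s ^ k) w t) :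
    HasDerivAt (fun s => u s ^ (k + 1)) ((k + 1) / k * u t * w) t := by
  have hkR : (k : ℝ) ≠ 0 := Nat.cast_ne_zero.2 hk
  have hroot : ∀ s, 0 < u s → (u s ^ k) ^ (((k : ℝ) + 1) / k) = u s ^ (k + 1) := fun s hs => by
    rw [← rpow_natCast, ← rpow_mul hs.le, mul_div_cancel₀ _ hkR, ← Nat.cast_add_one, rpow_natCast]
  have h' := h.rpow_const (p := ((k : ℝ) + 1) / k) (Or.inl (pow_pos hu.self_of_nhds k).ne')
  refine (h'.congr_of_eventuallyEq (hu.mono fun s hs => (hroot s hs).symm)).congr_deriv ?_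
  rw [show ((k : ℝ) + 1) / k - 1 = (k : ℝ)⁻¹ by field_simp; ring, ← rpow_natCast,
    ← rpow_mul hu.self_of_nhds.le, mul_inv_cancel₀ hkR, rpow_one]
  ring

/-- `X(t) = e^{(T₁ - t)/k}` with `T₁ = gγ + k log κ` and `κ = k/(k+1) · pγ`. -/
noncomputable def profileX (k : ℕ) (gγ pγ t : ℝ) : ℝ :=
  exp ((gγ + k * log (k / (k + 1) * pγ) - t) / k)

noncomputable def profileZ (k : ℕ) (γ gγ pγ t : ℝ) : ℝ :=
  γ - (k + 1) / pγ * log (1 + profileX k gγ pγ t)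

noncomputable def profileZDeriv (k : ℕ) (gγ pγ t : ℝ) : ℝ :=
  (k + 1) * profileX k gγ pγ t / (k * pγ * (1 + profileX k gγ pγ t))

section Profile

variable {k : ℕ} {γ gγ pγ : ℝ}

theorem profileX_pos (k : ℕ) (gγ pγ t : ℝ) : 0 < profileX k gγ pγ t := exp_pos _

theorem hasDerivAt_profileX (t : ℝ) :
    HasDerivAt (profileX k gγ pγ) (-profileX k gγ pγ t / k) t :=
  (((hasDerivAt_id t).const_sub _).div_const _).exp.congr_deriv (by simp [profileX]; ring)

theorem tendsto_profileX (hk : k ≠ 0) : Tendsto (profileX k gγ pγ) atTop (𝓝 0) :=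
  tendsto_exp_atBot.comp <|
    (tendsto_atBot_add_const_left _ _ tendsto_neg_atTop_atBot).atBot_div_const
      (Nat.cast_pos.2 (Nat.pos_of_ne_zero hk))

theorem hasDerivAt_profileZ (t : ℝ) :
    HasDerivAt (profileZ k γ gγ pγ) (profileZDeriv k gγ pγ t) t := by
  have hX := profileX_pos k gγ pγ t
  refine (((hasDerivAt_profileX t).const_add 1).log (by positivity)).const_mul _ |>.const_sub γ
    |>.congr_deriv ?_
  rw [profileZDeriv]
  rcases eq_or_ne (k : ℝ) 0 with hk | hk
  · simp [hk]
  rcases eq_or_ne pγ 0 with hp | hp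
  · simp [hp]
  field_simp

theorem tendsto_profileZ (hk : k ≠ 0) : Tendsto (profileZ k γ gγ pγ) atTop (𝓝 γ) := by
  unfold profileZ
  have h := ((tendsto_profileX (gγ := gγ) (pγ := pγ) hk).const_add 1).log (by norm_num)
  simpa using (h.const_mul ((k + 1) / pγ)).const_sub γ

theorem profileZDeriv_pos (hk : k ≠ 0) (hp : 0 < pγ) (t : ℝ) : 0 < profileZDeriv k gγ pγ t := by
  have hX := profileX_pos k gγ pγ t
  have hk' : (0 : ℝ) < k := Nat.cast_pos.2 (Nat.pos_of_ne_zero hk)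
  unfold profileZDeriv
  positivity

theorem mul_profileZDeriv (hk : k ≠ 0) (hp : pγ ≠ 0) (t : ℝ) :
    k / (k + 1) * pγ * profileZDeriv k gγ pγ t =
      profileX k gγ pγ t / (1 + profileX k gγ pγ t) := by
  have hX := profileX_pos k gγ pγ t
  unfold profileZDeriv
  field_simp

theorem hasDerivAt_profileZDeriv_pow (hk : k ≠ 0) (t : ℝ) :
    HasDerivAt (fun s => profileZDeriv k gγ pγ s ^ k)
      (-profileZDeriv k gγ pγ t ^ k / (1 + profileX k gγ pγ t)) t := by
  have hX := profileX_pos k gγ pγ t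
  have hζ : HasDerivAt (profileZDeriv k gγ pγ)
      (-profileZDeriv k gγ pγ t / (k * (1 + profileX k gγ pγ t))) t := by
    have hfun : profileZDeriv k gγ pγ = fun s =>
        (k + 1) / (k * pγ) * (profileX k gγ pγ s / (1 + profileX k gγ pγ s)) := by
      funext s
      rw [profileZDeriv, mul_div_mul_comm]
    rw [hfun]
    refine (((hasDerivAt_profileX t).div ((hasDerivAt_profileX t).const_add 1)
      (by positivity)).const_mul _).congr_deriv ?_
    field_simp
    ring
  refine (hζ.pow k).congr_deriv ?_
  obtain ⟨j, rfl⟩ := Nat.exists_eq_succ_of_ne_zero hk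
  field_simp
  simp only [Nat.succ_sub_one, pow_succ]

theorem exp_mul_profileZDeriv_pow (hk : k ≠ 0) (hp : 0 < pγ) (t : ℝ) :
    exp t * profileZDeriv k gγ pγ t ^ k = exp gγ / (1 + profileX k gγ pγ t) ^ k := by
  have hk' : (0 : ℝ) < k := Nat.cast_pos.2 (Nat.pos_of_ne_zero hk)
  have hκ : (0 : ℝ) < k / (k + 1) * pγ := by positivity
  have hζ : profileZDeriv k gγ pγ t =
      profileX k gγ pγ t / (k / (k + 1) * pγ * (1 + profileX k gγ pγ t)) := by
    rw [profileZDeriv]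
    field_simp
  have hXpow : profileX k gγ pγ t ^ k = (k / (k + 1) * pγ) ^ k * exp (gγ - t) := by
    rw [profileX, ← exp_nat_mul, ← exp_log (pow_pos hκ k), ← exp_add, log_pow]
    congr 1
    field_simp
    ring
  rw [hζ, div_pow, mul_pow, hXpow, mul_div_mul_left _ _ (pow_pos hκ k).ne', ← mul_div_assoc,
    ← exp_add, add_sub_cancel]

theorem tendsto_exp_mul_profileZDeriv_pow (hk : k ≠ 0) (hp : 0 < pγ) :
    Tendsto (fun t => exp t * profileZDeriv k gγ pγ t ^ k) atTop (𝓝 (exp gγ)) := by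
  simp_rw [exp_mul_profileZDeriv_pow hk hp]
  have hX := (tendsto_profileX (gγ := gγ) (pγ := pγ) hk).const_add 1
  have h := (tendsto_const_nhds (x := exp gγ)).div (hX.pow k)
    (by norm_num : ((1 : ℝ) + 0) ^ k ≠ 0)
  rwa [add_zero, one_pow, div_one] at h

theorem sub_mul_log_eq (hp : pγ ≠ 0) (t : ℝ) :
    gγ - (k + 1) * log (1 + profileX k gγ pγ t) = gγ + pγ * (profileZ k γ gγ pγ t - γ) := by
  unfold profileZ
  field_simp
  ring

theorem sub_le_of_le_profileZ (hk : k ≠ 0) (hp : 0 < pγ) {θ t : ℝ}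
    (hθ : θ ≤ profileZ k γ gγ pγ t) :
    gγ + k * log (k / (k + 1) * pγ) - t ≤ k / (k + 1) * pγ * (γ - θ) := by
  have hX := profileX_pos k gγ pγ t
  have hk' : (0 : ℝ) < k := Nat.cast_pos.2 (Nat.pos_of_ne_zero hk)
  have hlogX : k * log (profileX k gγ pγ t) = gγ + k * log (k / (k + 1) * pγ) - t := by
    rw [profileX, log_exp]
    field_simp
  have hlog : log (profileX k gγ pγ t) ≤ log (1 + profileX k gγ pγ t) :=
    log_le_log hX (by linarith)
  have hz : (k + 1) / pγ * log (1 + profileX k gγ pγ t) ≤ γ - θ := by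
    unfold profileZ at hθ
    linarith
  calc gγ + k * log (k / (k + 1) * pγ) - t
      ≤ k * log (1 + profileX k gγ pγ t) := by rw [← hlogX]; gcongr
    _ = k / (k + 1) * pγ * ((k + 1) / pγ * log (1 + profileX k gγ pγ t)) := by field_simp
    _ ≤ k / (k + 1) * pγ * (γ - θ) := by gcongr

end Profile

/-- Along a solution `y` of `-((y')^k)' = e^{g(y) - t}` on `[a, ∞)`, read `v = y'`, `G = g ∘ y`,
`P = g' ∘ y` and `Q = (g'' ∘ y) y'`; then `gγ = g(γ)` and `pγ = g'(γ)`. -/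
structure IsTail (k : ℕ) (a gγ pγ : ℝ) (v G P Q : ℝ → ℝ) : Prop where
  eventually_pos : ∀ t ≥ a, ∀ᶠ s in 𝓝 t, 0 < v s
  hasDerivAt_pow : ∀ t ≥ a, HasDerivAt (fun s => v s ^ k) (-exp (G t - t)) t
  hasDerivAt_G : ∀ t ≥ a, HasDerivAt G (P t * v t) t
  hasDerivAt_P : ∀ t ≥ a, HasDerivAt P (Q t) t
  nonneg_Q : ∀ t ≥ a, 0 ≤ Q t
  pos_P : ∀ t ≥ a, 0 < P t
  tendsto_v : Tendsto v atTop (𝓝 0)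
  tendsto_G : Tendsto G atTop (𝓝 gγ)
  tendsto_P : Tendsto P atTop (𝓝 pγ)

noncomputable def tailEnergy (k : ℕ) (v G c : ℝ → ℝ) (t : ℝ) : ℝ :=
  v t ^ k - exp (G t - t) - k / (k + 1) * c t * v t ^ (k + 1)

namespace IsTail

variable {k : ℕ} {a gγ pγ : ℝ} {v G P Q : ℝ → ℝ}

theorem ne_zero (h : IsTail k a gγ pγ v G P Q) : k ≠ 0 := by
  rintro rfl
  have h0 := (h.hasDerivAt_pow a le_rfl).unique (by simpa using hasDerivAt_const a (1 : ℝ))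
  exact (exp_pos _).ne' (neg_eq_zero.1 h0)

theorem pos (h : IsTail k a gγ pγ v G P Q) : ∀ t ≥ a, 0 < v t := fun t ht =>
  (h.eventually_pos t ht).self_of_nhds

theorem le_pγ (h : IsTail k a gγ pγ v G P Q) : ∀ t ≥ a, P t ≤ pγ :=
  le_of_tendsto_of_hasDerivAt_nonneg h.hasDerivAt_P h.nonneg_Q h.tendsto_P

theorem pγ_pos (h : IsTail k a gγ pγ v G P Q) : 0 < pγ :=
  (h.pos_P a le_rfl).trans_le (h.le_pγ a le_rfl)

theorem le_gγ (h : IsTail k a gγ pγ v G P Q) : ∀ t ≥ a, G t ≤ gγ :=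
  le_of_tendsto_of_hasDerivAt_nonneg h.hasDerivAt_G
    (fun t ht => (mul_pos (h.pos_P t ht) (h.pos t ht)).le) h.tendsto_G

theorem tendsto_exp_sub (h : IsTail k a gγ pγ v G P Q) :
    Tendsto (fun t => exp (G t - t)) atTop (𝓝 0) :=
  tendsto_exp_atBot.comp <| by
    simpa [sub_eq_add_neg] using h.tendsto_G.add_atBot tendsto_neg_atTop_atBot

theorem hasDerivAt_tailEnergy (h : IsTail k a gγ pγ v G P Q) {c c' : ℝ → ℝ}
    (hc : ∀ t ≥ a, HasDerivAt c (c' t) t) : ∀ t ≥ a, HasDerivAt (tailEnergy k v G c)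
      ((c t - P t) * v t * exp (G t - t) - k / (k + 1) * c' t * v t ^ (k + 1)) t := by
  intro t ht
  have hk : (k : ℝ) ≠ 0 := Nat.cast_ne_zero.2 h.ne_zero
  have hexp := ((h.hasDerivAt_G t ht).sub (hasDerivAt_id t)).exp
  have hsucc := (h.hasDerivAt_pow t ht).pow_succ_of_pow h.ne_zero (h.eventually_pos t ht)
  refine (((h.hasDerivAt_pow t ht).sub hexp).sub
    (((hc t ht).const_mul _).mul hsucc)).congr_deriv ?_
  simp only [Pi.sub_apply, id]
  field_simp
  ring

theorem tendsto_tailEnergy (h : IsTail k a gγ pγ v G P Q) {c : ℝ → ℝ} {L : ℝ}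
    (hc : Tendsto c atTop (𝓝 L)) : Tendsto (tailEnergy k v G c) atTop (𝓝 0) := by
  unfold tailEnergy
  have hv := h.tendsto_v
  have := ((hv.pow k).sub h.tendsto_exp_sub).sub
    ((hc.const_mul ((k : ℝ) / (k + 1))).mul (hv.pow (k + 1)))
  simpa [h.ne_zero] using this

theorem tailEnergy_nonneg (h : IsTail k a gγ pγ v G P Q) : ∀ t ≥ a, 0 ≤ tailEnergy k v G P t :=
  ge_of_tendsto_of_hasDerivAt_nonpos (h.hasDerivAt_tailEnergy h.hasDerivAt_P)
    (fun t ht => by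
      have := h.nonneg_Q t ht
      have := h.pos t ht
      simp only [sub_self, zero_mul, zero_sub, neg_nonpos]
      positivity)
    (h.tendsto_tailEnergy h.tendsto_P)

theorem tailEnergy_const_nonpos (h : IsTail k a gγ pγ v G P Q) :
    ∀ t ≥ a, tailEnergy k v G (fun _ => pγ) t ≤ 0 :=
  le_of_tendsto_of_hasDerivAt_nonneg
    (h.hasDerivAt_tailEnergy fun t _ => hasDerivAt_const t pγ)
    (fun t ht => by
      have := sub_nonneg.2 (h.le_pγ t ht)
      have := h.pos t ht
      simp only [zero_mul, mul_zero, sub_zero]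
      positivity)
    (h.tendsto_tailEnergy tendsto_const_nhds)

theorem pow_le_exp (h : IsTail k a gγ pγ v G P Q) : ∀ t ≥ a, v t ^ k ≤ exp (gγ - t) := by
  have hexp : ∀ t, HasDerivAt (fun s => exp (gγ - s)) (-exp (gγ - t)) t := fun t =>
    ((hasDerivAt_id t).const_sub gγ).exp.congr_deriv (by simp)
  have hlim : Tendsto (fun t => exp (gγ - t)) atTop (𝓝 0) :=
    tendsto_exp_atBot.comp (tendsto_atBot_add_const_left _ _ tendsto_neg_atTop_atBot)
  intro t ht
  have := le_of_tendsto_of_hasDerivAt_nonneg (f := fun s => v s ^ k - exp (gγ - s))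
    (fun s hs => (h.hasDerivAt_pow s hs).sub (hexp s))
    (fun s hs => by
      have := exp_le_exp.2 (sub_le_sub_right (h.le_gγ s hs) s)
      linarith)
    (by simpa [h.ne_zero] using (h.tendsto_v.pow k).sub hlim) t ht
  linarith

theorem tendsto_exp_mul_pow (h : IsTail k a gγ pγ v G P Q) :
    Tendsto (fun t => exp t * v t ^ k) atTop (𝓝 (exp gγ)) := by
  refine tendsto_of_tendsto_of_tendsto_of_le_of_le' ((continuous_exp.tendsto _).comp h.tendsto_G)
    tendsto_const_nhds ?_ ?_
  · filter_upwards [eventually_ge_atTop a] with t ht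
    have h1 := h.tailEnergy_nonneg t ht
    have h2 : 0 ≤ k / (k + 1) * P t * v t ^ (k + 1) := by
      have := h.pos_P t ht
      have := h.pos t ht
      positivity
    unfold tailEnergy at h1
    calc exp (G t) = exp t * exp (G t - t) := by rw [← exp_add]; ring_nf
      _ ≤ exp t * v t ^ k := by gcongr; linarith
  · filter_upwards [eventually_ge_atTop a] with t ht
    calc exp t * v t ^ k ≤ exp t * exp (gγ - t) := by gcongr; exact h.pow_le_exp t ht
      _ = exp gγ := by rw [← exp_add]; ring_nf

theorem profileZDeriv_le (h : IsTail k a gγ pγ v G P Q) :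
    ∀ t ≥ a, profileZDeriv k gγ pγ t ≤ v t := by
  have hk := h.ne_zero
  have hp := h.pγ_pos
  intro t ht
  refine le_of_pow_le_pow_left₀ hk (h.pos t ht).le (sub_nonpos.1 ?_)
  refine nonpos_of_add_deriv_nonneg_of_tendsto
    (d := fun s => profileZDeriv k gγ pγ s ^ k - v s ^ k)
    (fun s hs => (hasDerivAt_profileZDeriv_pow hk s).sub (h.hasDerivAt_pow s hs)) ?_ ?_ t ht
  · intro s hs hd
    have hκ := mul_profileZDeriv (gγ := gγ) hk hp.ne' s
    have hX := profileX_pos k gγ pγ s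
    set ζ := profileZDeriv k gγ pγ s
    set X := profileX k gγ pγ s
    have hv := h.pos s hs
    have hlt : v s < ζ := lt_of_pow_lt_pow_left₀ k (profileZDeriv_pos hk hp s).le (by linarith)
    have hE := h.tailEnergy_const_nonpos s hs
    unfold tailEnergy at hE
    beta_reduce at hE
    have hζ : ζ ^ k - ζ ^ k / (1 + X) = k / (k + 1) * pγ * ζ ^ (k + 1) := by
      rw [pow_succ, show k / (k + 1) * pγ * (ζ ^ k * ζ) = ζ ^ k * (k / (k + 1) * pγ * ζ) by ring,
        hκ]
      field_simp
      ring
    have hpow : k / (k + 1) * pγ * v s ^ (k + 1) ≤ k / (k + 1) * pγ * ζ ^ (k + 1) := by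
      gcongr
    linear_combination hE + hpow - hζ
  · simpa [mul_sub] using
      (tendsto_exp_mul_profileZDeriv_pow (gγ := gγ) hk hp).sub h.tendsto_exp_mul_pow

/-- Comparing `(g' ∘ y) y'` with `g'(γ) ζ`, rather than `y'` with `g'(γ) / g'(y) · ζ`, avoids
differentiating the quotient. -/
theorem mul_le_mul_profileZDeriv (h : IsTail k a gγ pγ v G P Q) :
    ∀ t ≥ a, P t * v t ≤ pγ * profileZDeriv k gγ pγ t := by
  have hk := h.ne_zero
  have hp := h.pγ_pos
  have hζ₀ := profileZDeriv_pos (gγ := gγ) hk hp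
  intro t ht
  refine le_of_pow_le_pow_left₀ hk (mul_pos hp (hζ₀ t)).le (sub_nonpos.1 ?_)
  refine nonpos_of_add_deriv_nonneg_of_tendsto
    (d := fun s => (P s * v s) ^ k - (pγ * profileZDeriv k gγ pγ s) ^ k)
    (d' := fun s => k * P s ^ (k - 1) * Q s * v s ^ k + P s ^ k * -exp (G s - s)
      - pγ ^ k * (-profileZDeriv k gγ pγ s ^ k / (1 + profileX k gγ pγ s))) ?_ ?_ ?_ t ht
  · intro s hs
    simp_rw [mul_pow]
    exact (((h.hasDerivAt_P s hs).pow k).mul (h.hasDerivAt_pow s hs)).sub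
      ((hasDerivAt_profileZDeriv_pow hk s).const_mul _)
  · intro s hs hd
    have hκ := mul_profileZDeriv (gγ := gγ) hk hp.ne' s
    have hX := profileX_pos k gγ pγ s
    set ζ := profileZDeriv k gγ pγ s
    set X := profileX k gγ pγ s
    have hv := h.pos s hs
    have hP := h.pos_P s hs
    have hpγζ : 0 < pγ * ζ := mul_pos hp (hζ₀ s)
    have hlt : pγ * ζ < P s * v s := lt_of_pow_lt_pow_left₀ k (by positivity) (by linarith)
    have hE := h.tailEnergy_nonneg s hs
    unfold tailEnergy at hE
    have hζ : (pγ * ζ) ^ k - pγ ^ k * (ζ ^ k / (1 + X)) = k / (k + 1) * (pγ * ζ) ^ (k + 1) := by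
      rw [show k / (k + 1) * (pγ * ζ) ^ (k + 1) = (pγ * ζ) ^ k * (k / (k + 1) * pγ * ζ) by ring,
        hκ, mul_pow]
      field_simp
      ring
    have hPv : k / (k + 1) * (P s * v s) ^ (k + 1) ≤ P s ^ k * (v s ^ k - exp (G s - s)) :=
      calc k / (k + 1) * (P s * v s) ^ (k + 1)
          = P s ^ k * (k / (k + 1) * P s * v s ^ (k + 1)) := by ring
        _ ≤ P s ^ k * (v s ^ k - exp (G s - s)) := by gcongr; linarith
    have hpow : k / (k + 1) * (pγ * ζ) ^ (k + 1) ≤ k / (k + 1) * (P s * v s) ^ (k + 1) := by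
      gcongr
    have hQ : 0 ≤ k * P s ^ (k - 1) * Q s * v s ^ k := by
      have := h.nonneg_Q s hs
      positivity
    linear_combination hPv + hQ + hpow + hζ
  · have := ((h.tendsto_P.pow k).mul h.tendsto_exp_mul_pow).sub
      ((tendsto_exp_mul_profileZDeriv_pow (gγ := gγ) hk hp).const_mul (pγ ^ k))
    simp only [sub_self] at this
    refine this.congr fun s => ?_
    ring

theorem le_profileZ (h : IsTail k a gγ pγ v G P Q) {y : ℝ → ℝ} {γ : ℝ}
    (hy : ∀ t ≥ a, HasDerivAt y (v t) t) (hyγ : Tendsto y atTop (𝓝 γ)) :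
    ∀ t ≥ a, y t ≤ profileZ k γ gγ pγ t := by
  intro t ht
  have := ge_of_tendsto_of_hasDerivAt_nonpos (f := fun s => profileZ k γ gγ pγ s - y s)
    (fun s hs => (hasDerivAt_profileZ s).sub (hy s hs))
    (fun s hs => sub_nonpos.2 (h.profileZDeriv_le s hs))
    (by simpa using (tendsto_profileZ h.ne_zero).sub hyγ) t ht
  linarith

theorem add_mul_profileZ_sub_le (h : IsTail k a gγ pγ v G P Q) (γ : ℝ) :
    ∀ t ≥ a, gγ + pγ * (profileZ k γ gγ pγ t - γ) ≤ G t := by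
  intro t ht
  have hz := (tendsto_profileZ (γ := γ) (gγ := gγ) (pγ := pγ) h.ne_zero).sub_const γ
  have hlim := ((hz.const_mul pγ).const_add gγ).sub h.tendsto_G
  simp only [sub_self, mul_zero, add_zero] at hlim
  have := le_of_tendsto_of_hasDerivAt_nonneg
    (f := fun s => gγ + pγ * (profileZ k γ gγ pγ s - γ) - G s)
    (fun s hs => ((((hasDerivAt_profileZ s).sub_const γ).const_mul pγ).const_add gγ).sub
      (h.hasDerivAt_G s hs))
    (fun s hs => sub_nonneg.2 (h.mul_le_mul_profileZDeriv s hs))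
    hlim t ht
  linarith

end IsTail

theorem isTail_of_solution {k : ℕ} {g g' g'' y : ℝ → ℝ} {s₀ γ T a : ℝ}
    (hg : ∀ x ≥ s₀, HasDerivAt g (g' x) x) (hg' : ∀ x ≥ s₀, HasDerivAt g' (g'' x) x)
    (hpos : ∀ x ≥ s₀, 0 < g' x ∧ 0 < g'' x) (hγ : s₀ ≤ γ)
    (hy : ∀ t, T < t → DifferentiableAt ℝ y t) (hy' : ∀ t, T < t → 0 < deriv y t)
    (hyeq : ∀ t, T < t → HasDerivAt (fun s => deriv y s ^ k) (-exp (g (y t) - t)) t)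
    (hylim : Tendsto y atTop (𝓝 γ)) (hy'lim : Tendsto (deriv y) atTop (𝓝 0))
    (hTa : T < a) (hya : s₀ ≤ y a) :
    IsTail k a (g γ) (g' γ) (deriv y) (fun t => g (y t)) (fun t => g' (y t))
      (fun t => g'' (y t) * deriv y t) := by
  have hyd : ∀ t ≥ a, HasDerivAt y (deriv y t) t := fun t ht =>
    (hy t (hTa.trans_le ht)).hasDerivAt
  have hys : ∀ t ≥ a, s₀ ≤ y t := fun t ht =>
    hya.trans (monotoneOn_Ici_of_hasDerivAt_nonneg hyd (fun s hs => (hy' s (hTa.trans hs)).le)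
      self_mem_Ici ht ht)
  exact
  { eventually_pos := fun t ht => (eventually_gt_nhds (hTa.trans_le ht)).mono hy'
    hasDerivAt_pow := fun t ht => hyeq t (hTa.trans_le ht)
    hasDerivAt_G := fun t ht => (hg (y t) (hys t ht)).comp t (hyd t ht)
    hasDerivAt_P := fun t ht => (hg' (y t) (hys t ht)).comp t (hyd t ht)
    nonneg_Q := fun t ht => mul_nonneg (hpos _ (hys t ht)).2.le (hy' t (hTa.trans_le ht)).le
    pos_P := fun t ht => (hpos _ (hys t ht)).1
    tendsto_v := hy'lim
    tendsto_G := (hg γ hγ).continuousAt.tendsto.comp hylim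
    tendsto_P := (hg' γ hγ).continuousAt.tendsto.comp hylim }

theorem comparison_estimates_general
    (n : ℕ) (hn : 2 ≤ n)
    (g g' g'' : ℝ → ℝ)
    (hgd1 : ∀ x > (0 : ℝ), HasDerivAt g (g' x) x)
    (hgd2 : ∀ x > (0 : ℝ), HasDerivAt g' (g'' x) x)
    (s₀ : ℝ) (hs₀ : 0 < s₀) (hgpos : ∀ x ≥ s₀, 0 < g' x ∧ 0 < g'' x)
    (γ : ℝ) (hγ : s₀ < γ)
    (Tγ : ℝ) (y : ℝ → ℝ)
    (hydiff : ∀ t, Tγ < t → DifferentiableAt ℝ y t)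
    (hy'pos : ∀ t, Tγ < t → 0 < deriv y t)
    (hyeq : ∀ t, Tγ < t → HasDerivAt (fun u : ℝ => deriv y u ^ (n - 1))
      (-Real.exp (g (y t) - t)) t)
    (hylim : Tendsto y atTop (nhds γ))
    (hy'lim : Tendsto (deriv y) atTop (nhds 0))
    (T' : ℝ) (hT'1 : Tγ < T') (hT'2 : y T' = s₀) :
    ∀ t, T' ≤ t →
      let T₁ := g γ + ((n : ℝ) - 1) * Real.log ((((n : ℝ) - 1) / (n : ℝ)) * g' γ)
      let X := Real.exp ((T₁ - t) / ((n : ℝ) - 1))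
      let z := γ - (n : ℝ) / g' γ * Real.log (1 + X)
      y t ≤ z ∧
      g γ - (n : ℝ) * Real.log (1 + X) ≤ g (y t) ∧
      g γ - (n : ℝ) * Real.log (1 + X) = g γ + g' γ * (z - γ) ∧
      g (y t) - t ≤ g (y t) - g γ + (((n : ℝ) - 1) / (n : ℝ)) * (γ - y t) * g' γ
        - ((n : ℝ) - 1) * Real.log ((((n : ℝ) - 1) / (n : ℝ)) * g' γ) := by
  obtain ⟨k, rfl⟩ : ∃ k, n = k + 1 := ⟨n - 1, by omega⟩
  have h := isTail_of_solution (fun x hx => hgd1 x (hs₀.trans_le hx))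
    (fun x hx => hgd2 x (hs₀.trans_le hx)) hgpos hγ.le hydiff hy'pos (by simpa using hyeq)
    hylim hy'lim hT'1 hT'2.ge
  intro t ht
  have hz := h.le_profileZ (fun s hs => (hydiff s (hT'1.trans_le hs)).hasDerivAt) hylim t ht
  have hgz := h.add_mul_profileZ_sub_le γ t ht
  have hsub := sub_mul_log_eq (k := k) (γ := γ) (gγ := g γ) h.pγ_pos.ne' t
  have hψ := sub_le_of_le_profileZ h.ne_zero h.pγ_pos hz
  simp only [Nat.cast_add, Nat.cast_one, add_sub_cancel_right]
  exact ⟨hz, hsub.trans_le hgz, hsub, by linear_combination hψ⟩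

/-- Lemma 3.3, estimates (3.18)-(3.20): for `t ≥ T̃` one has `y(t) ≤ z(t)`,
`g(y(t)) ≥ g - n log(1+X(t)) = g + g'(z(t)-γ)` and `g(y(t)) - t ≤ ψ(y(t))`, where
`T₁ = g + (n-1) log(((n-1)/n) g')`, `X(t) = e^{(T₁-t)/(n-1)}`,
`z(t) = γ - (n/g') log(1+X(t))` and
`ψ(θ) = g(θ) - g + ((n-1)/n)(γ-θ) g' - (n-1) log(((n-1)/n) g')`. -/
theorem comparison_estimates
    (n : ℕ) (hn : 2 ≤ n)
    (g g' g'' : ℝ → ℝ)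
    (hgd1 : ∀ x > (0 : ℝ), HasDerivAt g (g' x) x)
    (hgd2 : ∀ x > (0 : ℝ), HasDerivAt g' (g'' x) x)
    (hgc : ContinuousOn g'' (Set.Ioi 0))
    (s₀ : ℝ) (hs₀ : 0 < s₀) (hgpos : ∀ x ≥ s₀, 0 < g' x ∧ 0 < g'' x)
    (γ : ℝ) (hγ : s₀ < γ)
    (Tγ : ℝ) (y : ℝ → ℝ)
    (hycont : ContinuousOn y (Set.Ici Tγ))
    (hydiff : ∀ t, Tγ < t → DifferentiableAt ℝ y t)
    (hypos : ∀ t, Tγ < t → 0 < y t)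
    (hy'pos : ∀ t, Tγ < t → 0 < deriv y t)
    (hyT : y Tγ = 0)
    (hyeq : ∀ t, Tγ < t → HasDerivAt (fun u : ℝ => deriv y u ^ (n - 1))
      (-Real.exp (g (y t) - t)) t)
    (hylim : Tendsto y atTop (nhds γ))
    (hy'lim : Tendsto (deriv y) atTop (nhds 0))
    (T' : ℝ) (hT'1 : Tγ < T') (hT'2 : y T' = s₀) :
    ∀ t, T' ≤ t →
      let T₁ := g γ + ((n : ℝ) - 1) * Real.log ((((n : ℝ) - 1) / (n : ℝ)) * g' γ)
      let X := Real.exp ((T₁ - t) / ((n : ℝ) - 1))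
      let z := γ - (n : ℝ) / g' γ * Real.log (1 + X)
      y t ≤ z ∧
      g γ - (n : ℝ) * Real.log (1 + X) ≤ g (y t) ∧
      g γ - (n : ℝ) * Real.log (1 + X) = g γ + g' γ * (z - γ) ∧
      g (y t) - t ≤ g (y t) - g γ + (((n : ℝ) - 1) / (n : ℝ)) * (γ - y t) * g' γ
        - ((n : ℝ) - 1) * Real.log ((((n : ℝ) - 1) / (n : ℝ)) * g' γ) :=
  comparison_estimates_general n hn g g' g'' hgd1 hgd2 s₀ hs₀ hgpos γ hγ Tγ y hydiff hy'pos hyeq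
    hylim hy'lim T' hT'1 hT'2
end

section
/- Let n ≥ 2 be an integer, g' > 0 and T₁ ∈ ℝ. Set X(t) = e^{(T₁−t)/(n−1)}, z'(t) = (n/((n−1)·g'))·X(t)/(1+X(t)), z''(t) = −(n/((n−1)²·g'))·X(t)/(1+X(t))², and V₂'(t) = (n/(n−1)²)·X(t)/(1+X(t))². Then for every t ∈ ℝ: (a) ∫_t^∞ z'(s)^{n−2}·z''(s)·V₂'(s) ds = (g'/(n−1))·(n/((n−1)·g'))ⁿ·[−1/(n·(n+1)) + Σ_{r=0}^{n−1} (−1)^r·binom(n−1,r)/((r+2)·(1+X(t))^{r+2})]; (b) ∫_t^∞ z'(s)ⁿ·V₂'(s) ds = (g'/(n+1))·(n/((n−1)·g'))^{n+1}·X(t)^{n+1}/(1+X(t))^{n+1}. -/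
/-!
Write `X = exp ((T₁ - s) / (n - 1))` and `w = 1 / (1 + X)`, a logistic function of `s` increasing
to `1`. Then `X / (1 + X) = 1 - w`, `X / (1 + X) ^ 2 = w (1 - w)` and `w' = w (1 - w) / (n - 1)`,
so both integrands are constant multiples of `p(w) w'` for a polynomial `p`, and the
substitution `s ↦ w` turns them into `∫_{w(t)}^1 w (1 - w)^(n-1) dw` and
`∫_{w(t)}^1 (1 - w)^n dw`. The first is evaluated by expanding `(1 - w)^(n-1)` binomially; its
value at `w = 1` is the beta integral `∫₀¹ w (1 - w)^(n-1) dw = 1 / n - 1 / (n + 1)`.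
-/

open MeasureTheory Set Filter Topology Real

theorem integral_Ioi_comp_mul_deriv_of_nonneg {φ φ' G g : ℝ → ℝ} {t L : ℝ}
    (hφ : ∀ s ∈ Ici t, HasDerivAt φ (φ' s) s) (hG : ∀ x, HasDerivAt G (g x) x)
    (hφL : Tendsto φ atTop (𝓝 L)) (hnonneg : ∀ s ∈ Ioi t, 0 ≤ g (φ s) * φ' s) :
    ∫ s in Ioi t, g (φ s) * φ' s = G L - G (φ t) :=
  integral_Ioi_of_hasDerivAt_of_nonneg' (fun s hs ↦ (hG (φ s)).comp s (hφ s hs)) hnonneg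
    ((hG L).continuousAt.tendsto.comp hφL)

/-- `∫₀ʷ u (1 - u)ᵏ du`, expanded binomially. -/
noncomputable def betaPrimitive (k : ℕ) (w : ℝ) : ℝ :=
  ∑ r ∈ Finset.range (k + 1), (-1) ^ r * k.choose r * w ^ (r + 2) / (r + 2)

theorem mul_one_sub_pow_eq_sum (k : ℕ) (w : ℝ) :
    w * (1 - w) ^ k = ∑ r ∈ Finset.range (k + 1), (-1) ^ r * k.choose r * w ^ (r + 1) := by
  rw [sub_eq_neg_add, add_pow, Finset.mul_sum]
  refine Finset.sum_congr rfl fun r _ ↦ ?_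
  rw [neg_pow]
  ring

theorem hasDerivAt_betaPrimitive (k : ℕ) (w : ℝ) :
    HasDerivAt (betaPrimitive k) (w * (1 - w) ^ k) w := by
  rw [mul_one_sub_pow_eq_sum]
  refine HasDerivAt.fun_sum fun r _ ↦ ?_
  refine (((hasDerivAt_pow (r + 2) w).const_mul ((-1) ^ r * (k.choose r : ℝ))).div_const
    ((r : ℝ) + 2)).congr_deriv ?_
  push_cast
  field_simp

@[simp]
theorem betaPrimitive_zero (k : ℕ) : betaPrimitive k 0 = 0 := by
  simp [betaPrimitive]

theorem betaPrimitive_inv (k : ℕ) (y : ℝ) :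
    betaPrimitive k y⁻¹ =
      ∑ r ∈ Finset.range (k + 1), (-1) ^ r * k.choose r / ((r + 2) * y ^ (r + 2)) := by
  refine Finset.sum_congr rfl fun r _ ↦ ?_
  simp only [inv_pow, div_eq_mul_inv, mul_inv]
  ring

theorem betaPrimitive_one (k : ℕ) : betaPrimitive k 1 = 1 / ((k + 1) * (k + 2)) := by
  -- a second primitive of `w (1 - w) ^ k`, whose values at `0` and `1` are obvious
  have hH : ∀ w ∈ uIcc (0 : ℝ) 1, HasDerivAt
      (fun w : ℝ ↦ (1 - w) ^ (k + 2) / (k + 2) - (1 - w) ^ (k + 1) / (k + 1))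
      (w * (1 - w) ^ k) w := by
    intro w _
    have h1 := (((hasDerivAt_id w).const_sub 1).fun_pow (k + 2)).div_const ((k : ℝ) + 2)
    have h2 := (((hasDerivAt_id w).const_sub 1).fun_pow (k + 1)).div_const ((k : ℝ) + 1)
    refine (h1.fun_sub h2).congr_deriv ?_
    simp only [id, Nat.add_sub_cancel]
    push_cast
    field_simp
    ring
  have hint : IntervalIntegrable (fun w : ℝ ↦ w * (1 - w) ^ k) volume 0 1 :=
    (continuous_id.mul ((continuous_const.sub continuous_id).pow k)).intervalIntegrable _ _
  have hdiff := (intervalIntegral.integral_eq_sub_of_hasDerivAt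
    (fun w _ ↦ hasDerivAt_betaPrimitive k w) hint).symm.trans
      (intervalIntegral.integral_eq_sub_of_hasDerivAt hH hint)
  norm_num at hdiff
  rw [hdiff]
  field_simp
  ring

/-- In the paper's notation, `logistic (n - 1) T₁ s = 1 / (1 + X(s))`. -/
noncomputable def logistic (a T s : ℝ) : ℝ := sigmoid ((s - T) / a)

theorem logistic_eq_inv (a T s : ℝ) : logistic a T s = (1 + exp ((T - s) / a))⁻¹ := by
  rw [logistic, sigmoid_def, ← neg_div, neg_sub]

theorem one_sub_logistic (a T s : ℝ) :
    1 - logistic a T s = exp ((T - s) / a) / (1 + exp ((T - s) / a)) := by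
  have : 1 + exp ((T - s) / a) ≠ 0 := by positivity
  rw [logistic_eq_inv]
  field_simp
  ring

theorem logistic_mem_Ioo (a T s : ℝ) : logistic a T s ∈ Ioo 0 1 :=
  ⟨sigmoid_pos _, sigmoid_lt_one _⟩

section

variable {a : ℝ} (T t : ℝ)

theorem hasDerivAt_logistic (s : ℝ) :
    HasDerivAt (logistic a T) (logistic a T s * (1 - logistic a T s) / a) s := by
  refine ((hasDerivAt_sigmoid _).comp s
    (((hasDerivAt_id s).sub_const T).div_const a)).congr_deriv ?_
  simp only [logistic, id, one_mul, div_eq_mul_inv]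

theorem tendsto_logistic_atTop (ha : 0 < a) : Tendsto (logistic a T) atTop (𝓝 1) :=
  tendsto_sigmoid_atTop.comp ((tendsto_atTop_add_const_right _ (-T) tendsto_id).atTop_div_const ha)

theorem integral_Ioi_one_sub_logistic_pow_mul_deriv (ha : 0 < a) (k : ℕ) :
    ∫ s in Ioi t, (1 - logistic a T s) ^ k * (logistic a T s * (1 - logistic a T s) / a)
      = (1 - logistic a T t) ^ (k + 1) / (k + 1) := by
  have hG (x : ℝ) :
      HasDerivAt (fun x : ℝ ↦ -((1 - x) ^ (k + 1) / ((k : ℝ) + 1))) ((1 - x) ^ k) x := by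
    refine (((hasDerivAt_id x).const_sub 1).fun_pow (k + 1)).div_const _ |>.fun_neg
      |>.congr_deriv ?_
    simp only [id, Nat.add_sub_cancel]
    push_cast
    field_simp
  rw [integral_Ioi_comp_mul_deriv_of_nonneg (φ := logistic a T) (g := fun x ↦ (1 - x) ^ k)
    (fun s _ ↦ hasDerivAt_logistic T s) hG (tendsto_logistic_atTop T ha) fun s _ ↦ ?_]
  · simp only [sub_self]
    ring
  obtain ⟨hw₀, hw₁⟩ := logistic_mem_Ioo a T s
  have : 0 < 1 - logistic a T s := sub_pos.2 hw₁
  positivity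

theorem integral_Ioi_mul_one_sub_logistic_pow_mul_deriv (ha : 0 < a) (k : ℕ) :
    ∫ s in Ioi t, logistic a T s * (1 - logistic a T s) ^ k *
        (logistic a T s * (1 - logistic a T s) / a)
      = 1 / ((k + 1) * (k + 2)) - betaPrimitive k (logistic a T t) := by
  rw [integral_Ioi_comp_mul_deriv_of_nonneg (φ := logistic a T) (g := fun x ↦ x * (1 - x) ^ k)
    (fun s _ ↦ hasDerivAt_logistic T s) (hasDerivAt_betaPrimitive k) (tendsto_logistic_atTop T ha)
    fun s _ ↦ ?_, betaPrimitive_one]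
  obtain ⟨hw₀, hw₁⟩ := logistic_mem_Ioo a T s
  have : 0 < 1 - logistic a T s := sub_pos.2 hw₁
  positivity

end

/-- Lemma 4.5: explicit evaluation of the integrals
`I₁(t) = ∫_t^∞ (z')^{n-2} z'' V₂' ds` and `I₂(t) = ∫_t^∞ (z')ⁿ V₂' ds`, where
`z'(t) = (n/((n-1)g'))·X/(1+X)`, `z''(t) = -(n/((n-1)²g'))·X/(1+X)²`,
`V₂'(t) = (n/(n-1)²)·X/(1+X)²`, `X(t) = e^{(T₁-t)/(n-1)}`. -/
theorem linearization_integrals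
    (n : ℕ) (hn : 2 ≤ n) (g' T₁ : ℝ) (hg' : 0 < g') (t : ℝ) :
    ((∫ s in Set.Ioi t,
        ((n : ℝ) / (((n : ℝ) - 1) * g') * Real.exp ((T₁ - s) / ((n : ℝ) - 1))
          / (1 + Real.exp ((T₁ - s) / ((n : ℝ) - 1)))) ^ (n - 2)
        * (-((n : ℝ) / (((n : ℝ) - 1) ^ 2 * g')) * Real.exp ((T₁ - s) / ((n : ℝ) - 1))
            / (1 + Real.exp ((T₁ - s) / ((n : ℝ) - 1))) ^ 2)
        * ((n : ℝ) / ((n : ℝ) - 1) ^ 2 * Real.exp ((T₁ - s) / ((n : ℝ) - 1))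
            / (1 + Real.exp ((T₁ - s) / ((n : ℝ) - 1))) ^ 2)) =
      g' / ((n : ℝ) - 1) * ((n : ℝ) / (((n : ℝ) - 1) * g')) ^ n *
        (-(1 / ((n : ℝ) * ((n : ℝ) + 1)))
          + ∑ r ∈ Finset.range n, (-1 : ℝ) ^ r * ((n - 1).choose r : ℝ)
              / (((r : ℝ) + 2) * (1 + Real.exp ((T₁ - t) / ((n : ℝ) - 1))) ^ (r + 2)))) ∧
    ((∫ s in Set.Ioi t,
        ((n : ℝ) / (((n : ℝ) - 1) * g') * Real.exp ((T₁ - s) / ((n : ℝ) - 1))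
          / (1 + Real.exp ((T₁ - s) / ((n : ℝ) - 1)))) ^ n
        * ((n : ℝ) / ((n : ℝ) - 1) ^ 2 * Real.exp ((T₁ - s) / ((n : ℝ) - 1))
            / (1 + Real.exp ((T₁ - s) / ((n : ℝ) - 1))) ^ 2)) =
      g' / ((n : ℝ) + 1) * ((n : ℝ) / (((n : ℝ) - 1) * g')) ^ (n + 1)
        * Real.exp ((T₁ - t) / ((n : ℝ) - 1)) ^ (n + 1)
        / (1 + Real.exp ((T₁ - t) / ((n : ℝ) - 1))) ^ (n + 1)) := by
  obtain ⟨m, rfl⟩ : ∃ m, n = m + 2 := ⟨n - 2, by omega⟩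
  simp only [Nat.add_sub_cancel, show m + 2 - 1 = m + 1 from rfl]
  push_cast
  simp only [show (m : ℝ) + 2 - 1 = m + 1 by ring]
  have ha : (0 : ℝ) < m + 1 := by positivity
  have hX (s : ℝ) : 1 + exp ((T₁ - s) / (m + 1)) ≠ 0 := by positivity
  set c : ℝ := (m + 2) / ((m + 1) * g')
  constructor
  · rw [setIntegral_congr_fun measurableSet_Ioi (g := fun s ↦ -(g' / (m + 1) * c ^ (m + 2)) *
      (logistic (m + 1) T₁ s * (1 - logistic (m + 1) T₁ s) ^ (m + 1) *
        (logistic (m + 1) T₁ s * (1 - logistic (m + 1) T₁ s) / (m + 1)))) ?_,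
      integral_const_mul, integral_Ioi_mul_one_sub_logistic_pow_mul_deriv T₁ t ha,
      logistic_eq_inv, betaPrimitive_inv]
    · push_cast
      ring
    · intro s _
      have := hX s
      simp only [one_sub_logistic]
      simp only [logistic_eq_inv, div_pow, mul_pow, c]
      field_simp
      ring
  · rw [setIntegral_congr_fun measurableSet_Ioi (g := fun s ↦ g' * c ^ (m + 2 + 1) *
      ((1 - logistic (m + 1) T₁ s) ^ (m + 2) *
        (logistic (m + 1) T₁ s * (1 - logistic (m + 1) T₁ s) / (m + 1)))) ?_,
      integral_const_mul, integral_Ioi_one_sub_logistic_pow_mul_deriv T₁ t ha, one_sub_logistic]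
    · push_cast
      simp only [div_pow]
      ring
    · intro s _
      have := hX s
      simp only [one_sub_logistic]
      simp only [logistic_eq_inv, div_pow, mul_pow, c]
      field_simp
      ring
end
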